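/- arXiv:2403.16243 — 6 statements merged into one kernel-verified Lean document; each statement's English description precedes it below -/
import Mathlib

section
/- Let K be a field of characteristic 0, let f be a symmetric polynomial in n variables over K whose degree in each individual variable is at most d, and let a_1, ..., a_{n+d} be pairwise distinct elements of K. Then f(x_1,...,x_n) equals the sum over all n-element subsets S of {1,...,n+d} of f evaluated at (a_s)_{s in S}, multiplied by the product over i in {1,...,n+d} \ S of [ (product over j=1..n of (x_j - a_i)) divided by (product over s in S of (a_s - a_i)) ]. -/
open Finset

/-- A multivariate polynomial of degree at most `d` in each variable that vanishes at
all injective tuples drawn from at least `n + d` pairwise distinct points is zero. -/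
theorem chen_louck_vanish {K : Type*} [Field K] :
    ∀ (n : ℕ) {N d : ℕ}, n + d ≤ N →
    ∀ (g : MvPolynomial (Fin n) K), (∀ i, g.degreeOf i ≤ d) →
    ∀ (a : Fin N → K), Function.Injective a →
    (∀ u : Fin n → Fin N, Function.Injective u → MvPolynomial.eval (a ∘ u) g = 0) →
    g = 0 := by
  intro n
  induction n with
  | zero =>
    intro N d hN g hdeg a ha hv
    obtain ⟨c, rfl⟩ := MvPolynomial.C_surjective (Fin 0) g
    have h0 := hv (fun i => i.elim0) (fun i => i.elim0)
    rw [MvPolynomial.eval_C] at h0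
    rw [h0, map_zero]
  | succ n ih =>
    intro N d hN g hdeg a ha hv
    classical
    -- the coefficients of `finSuccEquiv g` vanish at all injective tuples
    have key : ∀ v : Fin n → Fin N, Function.Injective v → ∀ k : ℕ,
        MvPolynomial.eval (a ∘ v) ((MvPolynomial.finSuccEquiv K n g).coeff k) = 0 := by
      intro v hvinj k
      set p : Polynomial K :=
        (MvPolynomial.finSuccEquiv K n g).map (MvPolynomial.eval (a ∘ v)) with hp
      have hpz : p = 0 := by
        apply Polynomial.eq_zero_of_natDegree_lt_card_of_eval_eq_zero' p
          (((univ : Finset (Fin N)) \ univ.image v).image a)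
        · intro c hc
          obtain ⟨i, hi, rfl⟩ := Finset.mem_image.1 hc
          have hi' : ∀ j, v j ≠ i := by
            intro j hj
            rw [Finset.mem_sdiff] at hi
            exact hi.2 (Finset.mem_image.2 ⟨j, Finset.mem_univ j, hj⟩)
          have hcons : (Fin.cons (a i) (a ∘ v) : Fin (n + 1) → K) = a ∘ Fin.cons i v := by
            funext j
            refine Fin.cases ?_ ?_ j <;> simp
          rw [hp, ← MvPolynomial.eval_eq_eval_mv_eval', hcons]
          apply hv
          apply Fin.cons_injective_of_injective
          · rintro ⟨j, hj⟩
            exact hi' j hj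
          · exact hvinj
        · have hcard1 : #(((univ : Finset (Fin N)) \ univ.image v).image a)
              = N - n := by
            rw [Finset.card_image_of_injective _ ha, Finset.card_sdiff_of_subset (Finset.subset_univ _),
              Finset.card_image_of_injective _ hvinj, Finset.card_univ, Finset.card_univ,
              Fintype.card_fin, Fintype.card_fin]
          have hdegp : p.natDegree ≤ d := by
            rw [hp]
            refine le_trans Polynomial.natDegree_map_le ?_
            rw [MvPolynomial.natDegree_finSuccEquiv]
            exact hdeg 0
          rw [hcard1]
          exact lt_of_le_of_lt hdegp (by omega)
      have := congrArg (fun q : Polynomial K => q.coeff k) hpz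
      simpa [hp, Polynomial.coeff_map] using this
    have hcoeff : ∀ k, (MvPolynomial.finSuccEquiv K n g).coeff k = 0 := by
      intro k
      refine ih (d := d) (by omega) _ ?_ a ha (fun v hv' => key v hv' k)
      intro i
      exact le_trans (MvPolynomial.degreeOf_coeff_finSuccEquiv g i k) (hdeg i.succ)
    have hzg : MvPolynomial.finSuccEquiv K n g = 0 := Polynomial.ext fun k => by
      rw [hcoeff k, Polynomial.coeff_zero]
    exact (MvPolynomial.finSuccEquiv K n).injective (by simp [hzg])

/-- Chen–Louck interpolation for symmetric polynomials: a symmetric polynomial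
`f` in `n` variables of degree at most `d` in each variable is determined by its
values at the `n`-element subsets of `n + d` pairwise distinct points, via the
explicit Lagrange-type formula. -/
theorem chen_louck_interpolation {K : Type*} [Field K] [CharZero K]
    (n d : ℕ) (f : MvPolynomial (Fin n) K)
    (hsym : ∀ σ : Equiv.Perm (Fin n), MvPolynomial.rename σ f = f)
    (hdeg : ∀ i : Fin n, f.degreeOf i ≤ d)
    (a : Fin (n + d) → K) (ha : Function.Injective a)
    (x : Fin n → K) :
    MvPolynomial.eval x f =
      ∑ S : {S : Finset (Fin (n + d)) // S.card = n},
        MvPolynomial.eval (fun j : Fin n => a (S.1.orderIsoOfFin S.2 j : Fin (n + d))) f *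
          ∏ i ∈ S.1ᶜ, (∏ j : Fin n, (x j - a i)) / (∏ s ∈ S.1, (a s - a i)) := by
  classical
  -- the interpolation polynomial
  set F : MvPolynomial (Fin n) K :=
    ∑ S : {S : Finset (Fin (n + d)) // S.card = n},
      MvPolynomial.C
        (MvPolynomial.eval (fun j : Fin n => a (S.1.orderIsoOfFin S.2 j : Fin (n + d))) f *
          ∏ i ∈ S.1ᶜ, (∏ s ∈ S.1, (a s - a i))⁻¹) *
      ∏ i ∈ S.1ᶜ, ∏ j : Fin n, (MvPolynomial.X j - MvPolynomial.C (a i)) with hF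
  -- evaluation of F at an arbitrary point
  have heval : ∀ y : Fin n → K, MvPolynomial.eval y F =
      ∑ S : {S : Finset (Fin (n + d)) // S.card = n},
        MvPolynomial.eval (fun j : Fin n => a (S.1.orderIsoOfFin S.2 j : Fin (n + d))) f *
          ∏ i ∈ S.1ᶜ, (∏ j : Fin n, (y j - a i)) / (∏ s ∈ S.1, (a s - a i)) := by
    intro y
    rw [hF, map_sum]
    refine Finset.sum_congr rfl fun S _ => ?_
    rw [map_mul, MvPolynomial.eval_C, map_prod]
    simp only [map_prod, map_sub, MvPolynomial.eval_X, MvPolynomial.eval_C]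
    rw [Finset.prod_div_distrib, div_eq_mul_inv, Finset.prod_inv_distrib]
    ring
  -- degree bound for F
  have hdegF : ∀ i : Fin n, F.degreeOf i ≤ d := by
    intro i
    rw [hF]
    refine le_trans (MvPolynomial.degreeOf_sum_le _ _ _) ?_
    rw [Finset.sup_le_iff]
    intro S _
    refine le_trans (MvPolynomial.degreeOf_mul_le _ _ _) ?_
    rw [MvPolynomial.degreeOf_C, zero_add]
    refine le_trans (MvPolynomial.degreeOf_prod_le _ _ _) ?_
    have hinner : ∀ c : K,
        MvPolynomial.degreeOf i (∏ j : Fin n, (MvPolynomial.X j - MvPolynomial.C c)) ≤ 1 := by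
      intro c
      refine le_trans (MvPolynomial.degreeOf_prod_le _ _ _) ?_
      have h1 : ∀ j : Fin n,
          MvPolynomial.degreeOf i (MvPolynomial.X j - MvPolynomial.C c) ≤
            if i = j then 1 else 0 := by
        intro j
        refine le_trans (MvPolynomial.degreeOf_sub_le _ _ _) ?_
        rw [MvPolynomial.degreeOf_C, MvPolynomial.degreeOf_X]
        simp
      refine le_trans (Finset.sum_le_sum fun j _ => h1 j) ?_
      rw [Finset.sum_ite_eq]
      simp
    refine le_trans (Finset.sum_le_sum fun c _ => hinner (a c)) ?_
    rw [Finset.sum_const, smul_eq_mul, mul_one, Finset.card_compl, S.2,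
      Fintype.card_fin]
    omega
  -- F agrees with f at all injective tuples
  have hagree : ∀ u : Fin n → Fin (n + d), Function.Injective u →
      MvPolynomial.eval (a ∘ u) F = MvPolynomial.eval (a ∘ u) f := by
    intro u hu
    rw [heval]
    have hScard : #((univ : Finset (Fin n)).image u) = n := by
      rw [Finset.card_image_of_injective _ hu, Finset.card_univ, Fintype.card_fin]
    set S₀ : {S : Finset (Fin (n + d)) // S.card = n} := ⟨univ.image u, hScard⟩ with hS₀
    rw [Fintype.sum_eq_single S₀]
    · -- the main term
      have hmemc : ∀ i ∈ S₀.1ᶜ, (∏ s ∈ S₀.1, (a s - a i)) ≠ 0 := by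
        intro i hi
        refine Finset.prod_ne_zero_iff.2 fun s hs => ?_
        rw [Finset.mem_compl] at hi
        refine sub_ne_zero.2 fun h => hi ?_
        rw [ha h] at hs
        exact hs
      have hre : ∀ i : Fin (n + d),
          (∏ j : Fin n, (a (u j) - a i)) = ∏ s ∈ S₀.1, (a s - a i) := by
        intro i
        rw [hS₀]
        rw [Finset.prod_image (fun x _ y _ h => hu h)]
      have hprod : (∏ i ∈ S₀.1ᶜ,
          (∏ j : Fin n, ((a ∘ u) j - a i)) / (∏ s ∈ S₀.1, (a s - a i))) = 1 := by
        refine Finset.prod_eq_one fun i hi => ?_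
        simp only [Function.comp_apply]
        rw [hre i, div_self (hmemc i hi)]
      rw [hprod, mul_one]
      -- use symmetry of f to reorder the variables
      set σ : Fin n → Fin n := fun j =>
        (S₀.1.orderIsoOfFin S₀.2).symm ⟨u j, by
          rw [hS₀]; exact Finset.mem_image.2 ⟨j, Finset.mem_univ j, rfl⟩⟩ with hσ
      have hσinj : Function.Injective σ := by
        intro j1 j2 h
        rw [hσ] at h
        have := congrArg (fun t => ((S₀.1.orderIsoOfFin S₀.2) t : Fin (n + d))) h
        simp only [OrderIso.apply_symm_apply] at this
        exact hu this
      have hσbij : Function.Bijective σ := (Finite.injective_iff_bijective).1 hσinj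
      set σe : Equiv.Perm (Fin n) := Equiv.ofBijective σ hσbij with hσe
      have hord : ∀ j : Fin n,
          ((S₀.1.orderIsoOfFin S₀.2) (σ j) : Fin (n + d)) = u j := by
        intro j
        rw [hσ]
        simp
      calc MvPolynomial.eval (fun j : Fin n => a ((S₀.1.orderIsoOfFin S₀.2) j : Fin (n + d))) f
          = MvPolynomial.eval (fun j : Fin n => a ((S₀.1.orderIsoOfFin S₀.2) j : Fin (n + d)))
              (MvPolynomial.rename σe f) := by rw [hsym σe]
        _ = MvPolynomial.eval
              ((fun j : Fin n => a ((S₀.1.orderIsoOfFin S₀.2) j : Fin (n + d))) ∘ σe) f := by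
            rw [MvPolynomial.eval_rename]
        _ = MvPolynomial.eval (a ∘ u) f := by
            have harg : ((fun j : Fin n => a ((S₀.1.orderIsoOfFin S₀.2) j : Fin (n + d))) ∘ σe)
                = a ∘ u := by
              funext j
              show a ((S₀.1.orderIsoOfFin S₀.2) (σ j) : Fin (n + d)) = a (u j)
              rw [hord j]
            rw [harg]
    · -- the other terms vanish
      intro S hS
      have hne : S.1 ≠ univ.image u := fun h => hS (Subtype.ext (by rw [h]))
      have hsub : ¬ (univ.image u ⊆ S.1) := by
        intro hsub
        exact hne (Finset.eq_of_subset_of_card_le hsub (by rw [hScard, S.2])).symm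
      obtain ⟨t, ht, htS⟩ := Finset.not_subset.1 hsub
      obtain ⟨j0, _, rfl⟩ := Finset.mem_image.1 ht
      have hmem : u j0 ∈ S.1ᶜ := Finset.mem_compl.2 htS
      have : (∏ i ∈ S.1ᶜ,
          (∏ j : Fin n, ((a ∘ u) j - a i)) / (∏ s ∈ S.1, (a s - a i))) = 0 := by
        refine Finset.prod_eq_zero hmem ?_
        rw [div_eq_zero_iff]
        left
        refine Finset.prod_eq_zero (Finset.mem_univ j0) ?_
        simp
      rw [this, mul_zero]
  -- conclude via the vanishing lemma
  have hzero : f - F = 0 := by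
    refine chen_louck_vanish n le_rfl (f - F) ?_ a ha ?_
    · intro i
      refine le_trans (MvPolynomial.degreeOf_sub_le _ _ _) ?_
      exact max_le (hdeg i) (hdegF i)
    · intro u hu
      rw [map_sub, hagree u hu, sub_self]
  have : f = F := by rw [sub_eq_zero] at hzero; exact hzero
  rw [← heval x, this]
end

section
/- Let K be a field, d a nonnegative integer, k an integer with 0 ≤ k ≤ d+1, and let a_0,...,a_d and b_0,...,b_d be elements of K such that the a_i are pairwise distinct, the b_i are pairwise distinct, and a_i ≠ b_j for all i,j. For k-element subsets R, S of {0,1,...,d}, define p'(R,S) = [product over i in {0..d}\R of (product over j in S of (a_j - b_i)) / (product over j in R of (b_j - b_i))] times [product over i in {0..d}\S of (product over j in R of (b_j - a_i)) / (product over j in S of (a_j - a_i))]. Then for every fixed k-element subset R of {0,...,d}, the sum of p'(R,S) over all k-element subsets S of {0,...,d} equals 1. -/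
open Finset Polynomial Matrix

lemma sum_eval_mul_prod_inv {K : Type*} [Field K] [DecidableEq K] (s : Finset K) (P : K[X])
    (hP : P.degree < s.card) :
    ∑ z ∈ s, P.eval z * ∏ w ∈ s.erase z, (z - w)⁻¹ = P.coeff (s.card - 1) := by
  rcases s.eq_empty_or_nonempty with rfl | hs
  · have : P = 0 := by
      rw [← degree_eq_bot]
      simpa using hP
    simp [this]
  · have hinj : Set.InjOn id (s : Set K) := fun x _ y _ h => h
    have h := Lagrange.eq_interpolate (v := id) hinj hP
    have h2 := congrArg (fun q => Polynomial.coeff q (s.card - 1)) h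
    simp only [Lagrange.interpolate_apply, finset_sum_coeff] at h2
    rw [h2]
    refine Finset.sum_congr rfl fun z hz => ?_
    have hbasis : Lagrange.basis s id z
        = C (Lagrange.nodalWeight s id z) * Lagrange.nodal (s.erase z) id := by
      rw [Lagrange.basis_eq_prod_sub_inv_mul_nodal_div hz,
        ← Lagrange.nodal_erase_eq_nodal_div hz]
    rw [hbasis, ← mul_assoc, ← C_mul, coeff_C_mul]
    have hmon : (Lagrange.nodal (s.erase z) id).Monic := Lagrange.nodal_monic
    have hdeg : (Lagrange.nodal (s.erase z) id).natDegree = s.card - 1 := by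
      rw [Lagrange.natDegree_nodal, card_erase_of_mem hz]
    rw [← hdeg, hmon.coeff_natDegree, mul_one, Lagrange.nodalWeight]
    simp [mul_comm]

lemma prod_neg_one_mul {K : Type*} [CommRing K] {α : Type*} (s : Finset α) (g : α → K) :
    ∏ i ∈ s, -(g i) = (-1 : K) ^ s.card * ∏ i ∈ s, g i := by
  calc ∏ i ∈ s, -(g i) = ∏ i ∈ s, (-1 : K) * g i := Finset.prod_congr rfl fun i _ => by ring
    _ = (∏ _i ∈ s, (-1 : K)) * ∏ i ∈ s, g i := Finset.prod_mul_distrib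
    _ = (-1 : K) ^ s.card * ∏ i ∈ s, g i := by rw [Finset.prod_const]

lemma cauchy_mul_inv_eq_one {K : Type*} [Field K] (d : ℕ) (a b : Fin (d+1) → K)
    (ha : Function.Injective a) (hb : Function.Injective b) (hab : ∀ i j, a i ≠ b j) :
    (Matrix.of fun i j : Fin (d+1) => (a j - b i)⁻¹) *
      (Matrix.of fun j i : Fin (d+1) =>
        ((∏ m, (a j - b m)) * (∏ m ∈ univ.erase j, (a j - a m))⁻¹) *
          (((∏ m, (a m - b i)) * (∏ m ∈ univ.erase i, (b m - b i))⁻¹) * (a j - b i)⁻¹)) = 1 := by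
  classical
  have hab' : ∀ j i, a j - b i ≠ 0 := fun j i => sub_ne_zero_of_ne (hab j i)
  have hba' : ∀ i j, b i - a j ≠ 0 := fun i j => sub_ne_zero_of_ne (Ne.symm (hab j i))
  have haa : ∀ {j m : Fin (d+1)}, j ≠ m → a j - a m ≠ 0 :=
    fun h => sub_ne_zero_of_ne (fun e => h (ha e))
  have hbb : ∀ {j m : Fin (d+1)}, j ≠ m → b j - b m ≠ 0 :=
    fun h => sub_ne_zero_of_ne (fun e => h (hb e))
  set s0 : Finset K := Finset.image a univ with hs0
  have hs0card : s0.card = d + 1 := by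
    rw [hs0, Finset.card_image_of_injective _ ha, card_univ, Fintype.card_fin]
  have herase : ∀ j : Fin (d+1), s0.erase (a j) = Finset.image a (univ.erase j) :=
    fun j => (Finset.image_erase ha univ j).symm
  have hinj_on : ∀ t : Finset (Fin (d+1)), Set.InjOn a t := fun t x _ y _ h => ha h
  ext i i'
  rw [Matrix.mul_apply, Matrix.one_apply]
  simp only [Matrix.of_apply]
  set g : Fin (d+1) → K :=
    fun j => (∏ m, (a j - b m)) * (∏ m ∈ univ.erase j, (a j - a m))⁻¹ with hg
  set vv : K := (∏ m, (a m - b i')) * (∏ m ∈ univ.erase i', (b m - b i'))⁻¹ with hvv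
  have hgoalsum : ∑ j, (a j - b i)⁻¹ * (g j * (vv * (a j - b i')⁻¹))
      = (∑ j, g j * ((a j - b i)⁻¹ * (a j - b i')⁻¹)) * vv := by
    rw [Finset.sum_mul]
    exact Finset.sum_congr rfl fun j _ => by ring
  rcases eq_or_ne i i' with rfl | hii
  · rw [if_pos rfl, hgoalsum]
    have hbi : b i ∉ s0 := by
      rw [hs0]
      simp only [Finset.mem_image, mem_univ, true_and, not_exists]
      exact fun j e => hab j i e
    set P : K[X] := Lagrange.nodal (univ.erase i) b with hP
    have hcard1 : ((univ : Finset (Fin (d+1))).erase i).card = d := by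
      rw [card_erase_of_mem (mem_univ i), card_univ, Fintype.card_fin]
      omega
    have hs1card : (insert (b i) s0).card = d + 2 := by
      rw [card_insert_of_notMem hbi, hs0card]
    have hPdeg : P.degree < ((insert (b i) s0).card : WithBot ℕ) := by
      rw [hP, Lagrange.degree_nodal, hcard1, hs1card]
      exact_mod_cast by omega
    have hLC := sum_eval_mul_prod_inv (insert (b i) s0) P hPdeg
    have hcoeff : P.coeff ((insert (b i) s0).card - 1) = 0 := by
      apply coeff_eq_zero_of_natDegree_lt
      rw [hP, Lagrange.natDegree_nodal, hcard1, hs1card]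
      omega
    rw [hcoeff, Finset.sum_insert hbi, Finset.erase_insert hbi] at hLC
    rw [show (insert (b i) s0) = insert (b i) (image a univ) from by rw [hs0]] at hLC
    rw [hs0, Finset.sum_image (hinj_on univ)] at hLC
    have hterm : ∀ j : Fin (d+1),
        P.eval (a j) * ∏ w ∈ (insert (b i) (Finset.image a univ)).erase (a j), (a j - w)⁻¹
          = g j * ((a j - b i)⁻¹ * (a j - b i)⁻¹) := by
      intro j
      have heq : (insert (b i) (Finset.image a univ)).erase (a j)
          = insert (b i) ((Finset.image a univ).erase (a j)) :=
        Finset.erase_insert_of_ne (Ne.symm (hab j i))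
      have hbi' : b i ∉ (Finset.image a univ).erase (a j) := fun hm => hbi (by
        rw [hs0]
        exact Finset.mem_of_mem_erase hm)
      have h2 : ∏ w ∈ (Finset.image a univ).erase (a j), (a j - w)⁻¹
          = (∏ m ∈ univ.erase j, (a j - a m))⁻¹ := by
        rw [← hs0, herase j, Finset.prod_image (hinj_on _), ← Finset.prod_inv_distrib]
      have h1 : P.eval (a j) = (∏ m, (a j - b m)) * (a j - b i)⁻¹ := by
        rw [hP, Lagrange.eval_nodal]
        have e1 : ∏ m, (a j - b m) = (a j - b i) * ∏ m ∈ univ.erase i, (a j - b m) :=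
          (Finset.mul_prod_erase univ _ (mem_univ i)).symm
        rw [e1, mul_comm (a j - b i), mul_assoc, mul_inv_cancel₀ (hab' j i), mul_one]
      rw [heq, Finset.prod_insert hbi', h1, h2, hg]
      ring
    rw [Finset.sum_congr rfl (fun j _ => hterm j)] at hLC
    have hQ1 : P.eval (b i) = ∏ m ∈ univ.erase i, (b i - b m) := by
      rw [hP, Lagrange.eval_nodal]
    have hQ2 : ∏ w ∈ Finset.image a univ, (b i - w)⁻¹ = (∏ m, (b i - a m))⁻¹ := by
      rw [Finset.prod_image (hinj_on _), ← Finset.prod_inv_distrib]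
    rw [hQ1, hQ2] at hLC
    set Q1 : K := ∏ m ∈ univ.erase i, (b i - b m) with hq1
    set Q2 : K := ∏ m, (b i - a m) with hq2
    have hQ1ne : Q1 ≠ 0 := Finset.prod_ne_zero_iff.mpr fun m hm =>
      hbb (Finset.mem_erase.mp hm).1.symm
    have hQ2ne : Q2 ≠ 0 := Finset.prod_ne_zero_iff.mpr fun m _ => hba' i m
    have hsum : ∑ j, g j * ((a j - b i)⁻¹ * (a j - b i)⁻¹) = -(Q1 * Q2⁻¹) := by
      linear_combination hLC
    rw [hsum]
    -- now the sign computation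
    have e3 : ∏ m, (a m - b i) = (-1 : K)^(d+1) * Q2 := by
      rw [hq2]
      calc ∏ m, (a m - b i) = ∏ m, -(b i - a m) := Finset.prod_congr rfl fun m _ => by ring
        _ = (-1 : K)^(univ : Finset (Fin (d+1))).card * ∏ m, (b i - a m) :=
            prod_neg_one_mul _ _
        _ = (-1 : K)^(d+1) * ∏ m, (b i - a m) := by rw [card_univ, Fintype.card_fin]
    have e4 : ∏ m ∈ univ.erase i, (b m - b i) = (-1 : K)^d * Q1 := by
      rw [hq1]
      calc ∏ m ∈ univ.erase i, (b m - b i) = ∏ m ∈ univ.erase i, -(b i - b m) :=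
            Finset.prod_congr rfl fun m _ => by ring
        _ = (-1 : K)^((univ : Finset (Fin (d+1))).erase i).card * ∏ m ∈ univ.erase i, (b i - b m) :=
            prod_neg_one_mul _ _
        _ = (-1 : K)^d * ∏ m ∈ univ.erase i, (b i - b m) := by rw [hcard1]
    rw [hvv, e3, e4, mul_inv]
    have hsgn : ((-1 : K)^d)⁻¹ = (-1 : K)^d := by
      rw [← inv_pow, inv_neg, inv_one]
    have h0 : (-1 : K)^d * (-1 : K)^d = 1 := by
      rw [← mul_pow]
      norm_num
    have hs2 : (-1 : K)^(d+1) * (-1 : K)^d = -1 := by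
      rw [pow_succ]
      linear_combination (-1 : K) * h0
    rw [hsgn]
    calc -(Q1 * Q2⁻¹) * ((-1 : K)^(d+1) * Q2 * ((-1 : K)^d * Q1⁻¹))
        = -((-1 : K)^(d+1) * (-1 : K)^d) * ((Q1 * Q1⁻¹) * (Q2⁻¹ * Q2)) := by ring
      _ = 1 := by
          rw [hs2, mul_inv_cancel₀ hQ1ne, inv_mul_cancel₀ hQ2ne]
          norm_num
  · rw [if_neg hii, hgoalsum]
    have hd : 0 < d := Nat.pos_of_ne_zero fun h => hii (by subst h; exact Fin.ext (by omega))
    set P : K[X] := Lagrange.nodal ((univ.erase i).erase i') b with hP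
    have hii' : i' ∈ univ.erase i := mem_erase.mpr ⟨hii.symm, mem_univ i'⟩
    have hcard2 : (((univ : Finset (Fin (d+1))).erase i).erase i').card = d - 1 := by
      rw [card_erase_of_mem hii', card_erase_of_mem (mem_univ i), card_univ, Fintype.card_fin]
      omega
    have hPdeg : P.degree < (s0.card : WithBot ℕ) := by
      rw [hP, Lagrange.degree_nodal, hcard2, hs0card]
      exact_mod_cast by omega
    have hLC := sum_eval_mul_prod_inv s0 P hPdeg
    have hcoeff : P.coeff (s0.card - 1) = 0 := by
      apply coeff_eq_zero_of_natDegree_lt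
      rw [hP, Lagrange.natDegree_nodal, hcard2, hs0card]
      omega
    rw [hcoeff, hs0, Finset.sum_image (hinj_on univ)] at hLC
    have hterm : ∀ j : Fin (d+1),
        P.eval (a j) * ∏ w ∈ (Finset.image a univ).erase (a j), (a j - w)⁻¹
          = g j * ((a j - b i)⁻¹ * (a j - b i')⁻¹) := by
      intro j
      have h1 : P.eval (a j) = (∏ m, (a j - b m)) * ((a j - b i)⁻¹ * (a j - b i')⁻¹) := by
        rw [hP, Lagrange.eval_nodal]
        have e1 : ∏ m, (a j - b m) = (a j - b i) * ∏ m ∈ univ.erase i, (a j - b m) :=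
          (Finset.mul_prod_erase univ _ (mem_univ i)).symm
        have e2 : ∏ m ∈ univ.erase i, (a j - b m)
            = (a j - b i') * ∏ m ∈ (univ.erase i).erase i', (a j - b m) :=
          (Finset.mul_prod_erase _ _ hii').symm
        rw [e1, e2]
        have c1 := hab' j i
        have c2 := hab' j i'
        field_simp
      have h2 : ∏ w ∈ (Finset.image a univ).erase (a j), (a j - w)⁻¹
          = (∏ m ∈ univ.erase j, (a j - a m))⁻¹ := by
        rw [← hs0, herase j, Finset.prod_image (hinj_on _), ← Finset.prod_inv_distrib]
      rw [h1, h2, hg]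
      ring
    rw [Finset.sum_congr rfl (fun j _ => hterm j)] at hLC
    rw [hLC, zero_mul]

lemma prod_erase_eq_prod_Ioi_mul {M : Type*} [CommMonoid M] {k : ℕ} (f : Fin k → Fin k → M) :
    ∏ i, ∏ j ∈ univ.erase i, f i j =
      (∏ i, ∏ j ∈ Ioi i, f i j) * ∏ i, ∏ j ∈ Ioi i, f j i := by
  have h1 : ∀ i : Fin k, univ.erase i = Iio i ∪ Ioi i := by
    intro i
    ext j
    simp only [mem_erase, mem_univ, and_true, mem_union, mem_Iio, mem_Ioi]
    exact ⟨fun h => lt_or_gt_of_ne h, fun h => h.elim ne_of_lt ne_of_gt⟩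
  have h2 : ∀ i : Fin k, Disjoint (Iio i) (Ioi i) := fun i =>
    Finset.disjoint_left.mpr fun j hj hj' => absurd (mem_Ioi.mp hj') (not_lt.mpr (le_of_lt (mem_Iio.mp hj)))
  calc ∏ i, ∏ j ∈ univ.erase i, f i j
      = ∏ i, ((∏ j ∈ Iio i, f i j) * ∏ j ∈ Ioi i, f i j) := by
        refine Finset.prod_congr rfl fun i _ => ?_
        rw [h1 i, Finset.prod_union (h2 i)]
    _ = (∏ i, ∏ j ∈ Iio i, f i j) * ∏ i, ∏ j ∈ Ioi i, f i j := Finset.prod_mul_distrib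
    _ = (∏ i, ∏ j ∈ Ioi i, f j i) * ∏ i, ∏ j ∈ Ioi i, f i j := by
        congr 1
        refine Finset.prod_comm' fun i j => ?_
        simp [and_comm]
    _ = (∏ i, ∏ j ∈ Ioi i, f i j) * ∏ i, ∏ j ∈ Ioi i, f j i := mul_comm _ _

lemma det_cauchy_mul {K : Type*} [Field K] {k : ℕ} (x y : Fin k → K)
    (hy : Function.Injective y) (h : ∀ i j, x i - y j ≠ 0) :
    Matrix.det (Matrix.of fun i j => (x i - y j)⁻¹) * ∏ i, ∏ j, (x i - y j) =
      (∏ i, ∏ j ∈ Ioi i, (x j - x i)) * ∏ i, ∏ j ∈ Ioi i, (y i - y j) := by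
  rcases Nat.eq_zero_or_pos k with rfl | hk
  · simp
  set p : Fin k → K[X] := fun j => Lagrange.nodal (univ.erase j) y with hp
  have hdegp : ∀ j, (p j).natDegree < k := fun j => by
    rw [hp]
    simp only [Lagrange.natDegree_nodal, card_erase_of_mem (mem_univ j), card_univ,
      Fintype.card_fin]
    omega
  set T : Matrix (Fin k) (Fin k) K := Matrix.of fun l j => (p j).coeff l with hT
  have hM : Matrix.vandermonde x * T = Matrix.of fun i j => (p j).eval (x i) := by
    ext i j
    simp only [Matrix.of_apply]
    rw [Matrix.mul_apply]
    rw [eval_eq_sum_range' (hdegp j) (x i), ← Fin.sum_univ_eq_sum_range]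
    exact Finset.sum_congr rfl fun l _ => by
      simp [Matrix.vandermonde, hT, mul_comm]
  have hW : Matrix.vandermonde y * T =
      Matrix.diagonal (fun i => ∏ j ∈ univ.erase i, (y i - y j)) := by
    ext i j
    rw [Matrix.mul_apply]
    have : ∑ l, Matrix.vandermonde y i l * T l j = (p j).eval (y i) := by
      rw [eval_eq_sum_range' (hdegp j) (y i), ← Fin.sum_univ_eq_sum_range]
      exact Finset.sum_congr rfl fun l _ => by
        simp [Matrix.vandermonde, hT, mul_comm]
    rw [this]
    rcases eq_or_ne i j with rfl | hij
    · rw [Matrix.diagonal_apply_eq, hp]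
      simp [Lagrange.eval_nodal]
    · rw [Matrix.diagonal_apply_ne _ hij, hp]
      exact Lagrange.eval_nodal_at_node (mem_erase.mpr ⟨hij, mem_univ i⟩)
  have hVy : Matrix.det (Matrix.vandermonde y) = ∏ i, ∏ j ∈ Ioi i, (y j - y i) :=
    Matrix.det_vandermonde y
  have hVyne : (∏ i : Fin k, ∏ j ∈ Ioi i, (y j - y i)) ≠ 0 := by
    rw [Finset.prod_ne_zero_iff]
    intro i _
    rw [Finset.prod_ne_zero_iff]
    intro j hj
    exact sub_ne_zero_of_ne fun e => ne_of_gt (mem_Ioi.mp hj) (hy e)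
  -- step: row-scaled Cauchy equals eval matrix
  have hscale : (∏ i, ∏ j, (x i - y j)) * Matrix.det (Matrix.of fun i j => (x i - y j)⁻¹)
      = Matrix.det (Matrix.of fun i j => (p j).eval (x i)) := by
    rw [← Matrix.det_mul_column (fun i => ∏ j, (x i - y j))]
    congr 1
    ext i j
    simp only [Matrix.of_apply]
    rw [hp, Lagrange.eval_nodal, ← Finset.mul_prod_erase _ _ (mem_univ j),
      mul_comm (x i - y j), mul_assoc, mul_inv_cancel₀ (h i j), mul_one]
  have hdetM : Matrix.det (Matrix.of fun i j => (p j).eval (x i))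
      = Matrix.det (Matrix.vandermonde x) * Matrix.det T := by
    rw [← Matrix.det_mul, hM]
  have hdetW : Matrix.det (Matrix.vandermonde y) * Matrix.det T
      = ∏ i, ∏ j ∈ univ.erase i, (y i - y j) := by
    rw [← Matrix.det_mul, hW, Matrix.det_diagonal]
  -- combine
  apply mul_left_cancel₀ hVyne
  rw [← hVy]
  calc (Matrix.vandermonde y).det *
        (Matrix.det (Matrix.of fun i j => (x i - y j)⁻¹) * ∏ i, ∏ j, (x i - y j))
      = ((∏ i, ∏ j, (x i - y j)) * Matrix.det (Matrix.of fun i j => (x i - y j)⁻¹)) *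
          (Matrix.vandermonde y).det := by ring
    _ = ((Matrix.vandermonde x).det * T.det) * (Matrix.vandermonde y).det := by
        rw [hscale, hdetM]
    _ = (Matrix.vandermonde x).det * ((Matrix.vandermonde y).det * T.det) := by ring
    _ = (Matrix.vandermonde x).det * ∏ i, ∏ j ∈ univ.erase i, (y i - y j) := by rw [hdetW]
    _ = (∏ i, ∏ j ∈ Ioi i, (x j - x i)) *
        ((∏ i, ∏ j ∈ Ioi i, (y i - y j)) * (∏ i, ∏ j ∈ Ioi i, (y j - y i))) := by
        rw [Matrix.det_vandermonde x, prod_erase_eq_prod_Ioi_mul (fun i j => (y i - y j))]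
    _ = (Matrix.vandermonde y).det *
        ((∏ i, ∏ j ∈ Ioi i, (x j - x i)) * ∏ i, ∏ j ∈ Ioi i, (y i - y j)) := by
        rw [hVy]; ring

noncomputable def detmul {R : Type*} [CommRing R] {k n : ℕ} (A : Matrix (Fin k) (Fin n) R)
    (B : Matrix (Fin n) (Fin k) R) (S : Finset (Fin n)) : R :=
  if h : S.card = k then
    (A.submatrix id (S.orderEmbOfFin h)).det * (B.submatrix (S.orderEmbOfFin h) id).det
  else 0

theorem det_mul_eq_sum_detmul {R : Type*} [CommRing R] {k n : ℕ}
    (A : Matrix (Fin k) (Fin n) R) (B : Matrix (Fin n) (Fin k) R) :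
    (A * B).det = ∑ S ∈ (univ : Finset (Fin n)).powersetCard k, detmul A B S := by
  classical
  have h1 : (A * B).det
      = ∑ f : Fin k → Fin n, (∏ i, A i (f i)) * (B.submatrix f id).det := by
    have hrow : (A * B) = Matrix.of fun i => ∑ j : Fin n, A i j • B j := by
      ext i l
      simp [Matrix.mul_apply]
    rw [hrow]
    have := (Matrix.detRowAlternating (R := R) (n := Fin k)).toMultilinearMap.map_sum
      (g := fun (i : Fin k) (j : Fin n) => A i j • B j)
    rw [show Matrix.det (Matrix.of fun i => ∑ j : Fin n, A i j • B j)
        = (Matrix.detRowAlternating (R := R) (n := Fin k)).toMultilinearMap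
            (fun i => ∑ j : Fin n, A i j • B j) from rfl, this]
    refine Finset.sum_congr rfl fun f _ => ?_
    rw [MultilinearMap.map_smul_univ]
    rfl
  rw [h1]
  rw [← Finset.sum_filter_of_ne
    (p := fun f : Fin k → Fin n => Function.Injective f) (fun f _ hf => ?_)]
  swap
  · by_contra hinj
    apply hf
    simp only [Function.Injective, not_forall] at hinj
    obtain ⟨i, j, hij, hne⟩ := hinj
    have : (B.submatrix f id).det = 0 := by
      apply Matrix.det_zero_of_row_eq hne
      funext l
      simp [Matrix.submatrix_apply, hij]
    rw [this, mul_zero]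
  rw [← Finset.sum_fiberwise_of_maps_to (g := fun f : Fin k → Fin n => univ.image f)
    (t := (univ : Finset (Fin n)).powersetCard k) ?_]
  swap
  · intro f hf
    rw [Finset.mem_powersetCard_univ]
    rw [Finset.card_image_of_injective _ (Finset.mem_filter.mp hf).2, card_univ,
      Fintype.card_fin]
  refine Finset.sum_congr rfl fun S hS => ?_
  have hSk : S.card = k := Finset.mem_powersetCard_univ.mp hS
  set e := S.orderEmbOfFin hSk with he
  have himg : univ.image ⇑e = S := by
    apply Finset.coe_injective
    rw [Finset.coe_image, Finset.coe_univ, Set.image_univ, Finset.range_orderEmbOfFin]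
  have hbij : ∑ f ∈ (univ.filter (fun f : Fin k → Fin n => Function.Injective f)).filter
        (fun f => univ.image f = S), (∏ i, A i (f i)) * (B.submatrix f id).det
      = ∑ σ : Equiv.Perm (Fin k),
          (∏ i, A i (e (σ i))) * (B.submatrix (⇑e ∘ ⇑σ) id).det := by
    refine (Finset.sum_bij (fun (σ : Equiv.Perm (Fin k)) _ => ⇑e ∘ ⇑σ) ?_ ?_ ?_ ?_).symm
    · intro σ _
      refine Finset.mem_filter.mpr ⟨Finset.mem_filter.mpr ⟨Finset.mem_univ _, ?_⟩, ?_⟩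
      · exact ((S.orderEmbOfFin hSk).injective).comp σ.injective
      · rw [← Finset.image_image, Finset.image_univ_equiv, himg]
    · intro σ _ σ' _ hss
      apply Equiv.ext
      intro i
      exact (S.orderEmbOfFin hSk).injective (congrFun hss i)
    · intro f hf
      obtain ⟨hf1, hf2⟩ := Finset.mem_filter.mp hf
      have hfinj : Function.Injective f := (Finset.mem_filter.mp hf1).2
      have hfS : ∀ i, f i ∈ S := fun i => by
        rw [← hf2]; exact Finset.mem_image_of_mem f (Finset.mem_univ i)
      set g : Fin k → Fin k := fun i => (S.orderIsoOfFin hSk).symm ⟨f i, hfS i⟩ with hg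
      have hginj : Function.Injective g := by
        intro i j hij
        apply hfinj
        have h2 := congrArg (S.orderIsoOfFin hSk) hij
        simp only [hg, OrderIso.apply_symm_apply] at h2
        exact congrArg Subtype.val h2
      refine ⟨Equiv.ofBijective g (Finite.injective_iff_bijective.mp hginj),
        Finset.mem_univ _, ?_⟩
      funext i
      show e (g i) = f i
      rw [← Finset.coe_orderIsoOfFin_apply, hg, OrderIso.apply_symm_apply]
    · intro σ _
      rfl
  rw [hbij, detmul, dif_pos hSk]
  have hAeq : ∀ σ : Equiv.Perm (Fin k),
      (∏ i, ((A.submatrix id ⇑e)ᵀ) (σ i) i) = ∏ i, A i (e (σ i)) := fun σ =>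
    Finset.prod_congr rfl fun i _ => rfl
  have hstep : ∀ σ : Equiv.Perm (Fin k),
      (∏ i, A i (e (σ i))) * (B.submatrix (⇑e ∘ ⇑σ) id).det
        = (((Equiv.Perm.sign σ : ℤ) : R) * ∏ i, ((A.submatrix id ⇑e)ᵀ) (σ i) i)
            * (B.submatrix (⇑e) id).det := by
    intro σ
    have hsub : (B.submatrix (⇑e ∘ ⇑σ) id) = (B.submatrix ⇑e id).submatrix ⇑σ id := by
      rw [Matrix.submatrix_submatrix]
      rfl
    rw [hsub, Matrix.det_permute, hAeq σ]
    ring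
  calc ∑ σ : Equiv.Perm (Fin k),
        (∏ i, A i (e (σ i))) * (B.submatrix (⇑e ∘ ⇑σ) id).det
      = ∑ σ : Equiv.Perm (Fin k),
          (((Equiv.Perm.sign σ : ℤ) : R) * ∏ i, ((A.submatrix id ⇑e)ᵀ) (σ i) i)
            * (B.submatrix (⇑e) id).det := Finset.sum_congr rfl fun σ _ => hstep σ
    _ = ((A.submatrix id ⇑e)ᵀ).det * (B.submatrix ⇑e id).det := by
        rw [← Finset.sum_mul, ← Matrix.det_apply']
    _ = (A.submatrix id ⇑e).det * (B.submatrix ⇑e id).det := by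
        rw [Matrix.det_transpose]

lemma sq_prod_pairs {K : Type*} [CommRing K] {k : ℕ} (g h : Fin k → K) :
    ((∏ i, ∏ j ∈ Ioi i, (g j - g i)) * (∏ i, ∏ j ∈ Ioi i, (h i - h j)))^2
      = (∏ i, ∏ j ∈ univ.erase i, (g i - g j)) * (∏ i, ∏ j ∈ univ.erase i, (h i - h j)) := by
  rw [prod_erase_eq_prod_Ioi_mul (fun i j => g i - g j),
    prod_erase_eq_prod_Ioi_mul (fun i j => h i - h j)]
  have hpt : (∏ i, ∏ j ∈ Ioi i, ((g i - g j) * (h j - h i)))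
      = ∏ i, ∏ j ∈ Ioi i, ((g j - g i) * (h i - h j)) := by
    refine Finset.prod_congr rfl fun i _ => Finset.prod_congr rfl fun j _ => by ring
  have expand : ∀ (p q : Fin k → Fin k → K),
      (∏ i, ∏ j ∈ Ioi i, (p i j * q i j))
        = (∏ i, ∏ j ∈ Ioi i, p i j) * ∏ i, ∏ j ∈ Ioi i, q i j := by
    intro p q
    rw [← Finset.prod_mul_distrib]
    exact Finset.prod_congr rfl fun i _ => Finset.prod_mul_distrib
  calc ((∏ i, ∏ j ∈ Ioi i, (g j - g i)) * (∏ i, ∏ j ∈ Ioi i, (h i - h j)))^2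
      = ((∏ i, ∏ j ∈ Ioi i, (g j - g i)) * ∏ i, ∏ j ∈ Ioi i, (h i - h j)) *
        ((∏ i, ∏ j ∈ Ioi i, ((g j - g i) * (h i - h j)))) := by
        rw [expand (fun i j => g j - g i) (fun i j => h i - h j)]
        ring
    _ = ((∏ i, ∏ j ∈ Ioi i, (g j - g i)) * ∏ i, ∏ j ∈ Ioi i, (h i - h j)) *
        ((∏ i, ∏ j ∈ Ioi i, ((g i - g j) * (h j - h i)))) := by rw [hpt]
    _ = ((∏ i, ∏ j ∈ Ioi i, (g i - g j)) * ∏ i, ∏ j ∈ Ioi i, (g j - g i)) *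
        ((∏ i, ∏ j ∈ Ioi i, (h i - h j)) * ∏ i, ∏ j ∈ Ioi i, (h j - h i)) := by
        rw [expand (fun i j => g i - g j) (fun i j => h j - h i)]
        ring

/-- Lemma 5.2 of the paper: for a fixed `k`-element subset `R` of `{0,…,d}`, the
forward quantities `p'(R,S)` sum to `1` over all `k`-element subsets `S`. -/
theorem sum_p_prime_eq_one {K : Type*} [Field K] (d k : ℕ) (hk : k ≤ d + 1)
    (a b : Fin (d + 1) → K) (ha : Function.Injective a) (hb : Function.Injective b)
    (hab : ∀ i j, a i ≠ b j)
    (R : Finset (Fin (d + 1))) (hR : R.card = k) :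
    ∑ S ∈ Finset.univ.powersetCard k,
      ((∏ i ∈ Rᶜ, (∏ j ∈ S, (a j - b i)) / (∏ j ∈ R, (b j - b i))) *
        (∏ i ∈ Sᶜ, (∏ j ∈ R, (b j - a i)) / (∏ j ∈ S, (a j - a i)))) = 1 := by
  classical
  have hab' : ∀ j i, a j - b i ≠ 0 := fun j i => sub_ne_zero_of_ne (hab j i)
  have hba' : ∀ i j, b i - a j ≠ 0 := fun i j => sub_ne_zero_of_ne (Ne.symm (hab j i))
  have haa : ∀ {j m : Fin (d+1)}, j ≠ m → a j - a m ≠ 0 :=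
    fun h => sub_ne_zero_of_ne (fun e => h (ha e))
  have hbb : ∀ {j m : Fin (d+1)}, j ≠ m → b j - b m ≠ 0 :=
    fun h => sub_ne_zero_of_ne (fun e => h (hb e))
  set u : Fin (d+1) → K :=
    fun j => (∏ m, (a j - b m)) * (∏ m ∈ univ.erase j, (a j - a m))⁻¹ with hu
  set v : Fin (d+1) → K :=
    fun i => (∏ m, (a m - b i)) * (∏ m ∈ univ.erase i, (b m - b i))⁻¹ with hv
  set CC : Matrix (Fin (d+1)) (Fin (d+1)) K := Matrix.of fun i j => (a j - b i)⁻¹ with hCC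
  set DD : Matrix (Fin (d+1)) (Fin (d+1)) K :=
    Matrix.of fun j i =>
      ((∏ m, (a j - b m)) * (∏ m ∈ univ.erase j, (a j - a m))⁻¹) *
        (((∏ m, (a m - b i)) * (∏ m ∈ univ.erase i, (b m - b i))⁻¹) * (a j - b i)⁻¹) with hDD
  have hCD : CC * DD = 1 := cauchy_mul_inv_eq_one d a b ha hb hab
  set e := R.orderEmbOfFin hR with he
  set A : Matrix (Fin k) (Fin (d+1)) K := CC.submatrix ⇑e id with hA
  set B : Matrix (Fin (d+1)) (Fin k) K := DD.submatrix id ⇑e with hB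
  have hABone : A * B = 1 := by
    ext s r
    have hentry : ∀ x y, (CC * DD) x y = (1 : Matrix (Fin (d+1)) (Fin (d+1)) K) x y :=
      fun x y => by rw [hCD]
    have h1 := hentry (e s) (e r)
    rw [Matrix.mul_apply] at h1
    rw [Matrix.mul_apply]
    have h2 : ∑ l, A s l * B l r = ∑ l, CC (e s) l * DD l (e r) := rfl
    rw [h2, h1, Matrix.one_apply, Matrix.one_apply]
    by_cases hsr : s = r
    · rw [if_pos hsr, if_pos (by rw [hsr])]
    · rw [if_neg hsr, if_neg (fun hh => hsr (e.injective hh))]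
  have hdet : ∑ S ∈ (univ : Finset (Fin (d+1))).powersetCard k, detmul A B S = 1 := by
    rw [← det_mul_eq_sum_detmul, hABone, Matrix.det_one]
  rw [← hdet]
  refine Finset.sum_congr rfl fun S hS => ?_
  have hSk : S.card = k := Finset.mem_powersetCard_univ.mp hS
  set f := S.orderEmbOfFin hSk with hf
  rw [detmul, dif_pos hSk]
  -- embedding facts
  have hfinj : Function.Injective ⇑f := f.injective
  have heinj : Function.Injective ⇑e := e.injective
  have himgS : Finset.image ⇑f univ = S := by
    apply Finset.coe_injective
    rw [Finset.coe_image, Finset.coe_univ, Set.image_univ, hf, Finset.range_orderEmbOfFin]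
  have himgR : Finset.image ⇑e univ = R := by
    apply Finset.coe_injective
    rw [Finset.coe_image, Finset.coe_univ, Set.image_univ, he, Finset.range_orderEmbOfFin]
  have hpS : ∀ F : Fin (d+1) → K, (∏ s : Fin k, F (f s)) = ∏ j ∈ S, F j := by
    intro F
    rw [← himgS, Finset.prod_image (fun p _ q _ h => hfinj h)]
  have hpR : ∀ F : Fin (d+1) → K, (∏ s : Fin k, F (e s)) = ∏ j ∈ R, F j := by
    intro F
    rw [← himgR, Finset.prod_image (fun p _ q _ h => heinj h)]
  have hpeS : ∀ G : Fin (d+1) → Fin (d+1) → K,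
      (∏ s, ∏ s' ∈ univ.erase s, G (f s) (f s')) = ∏ j ∈ S, ∏ j' ∈ S.erase j, G j j' := by
    intro G
    have inner : ∀ s : Fin k,
        (∏ s' ∈ univ.erase s, G (f s) (f s')) = ∏ j' ∈ S.erase (f s), G (f s) j' := by
      intro s
      rw [← himgS, ← Finset.image_erase hfinj, Finset.prod_image (fun p _ q _ h => hfinj h)]
    rw [Finset.prod_congr rfl fun s _ => inner s]
    exact hpS (fun j => ∏ j' ∈ S.erase j, G j j')
  have hpeR : ∀ G : Fin (d+1) → Fin (d+1) → K,
      (∏ s, ∏ s' ∈ univ.erase s, G (e s) (e s')) = ∏ j ∈ R, ∏ j' ∈ R.erase j, G j j' := by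
    intro G
    have inner : ∀ s : Fin k,
        (∏ s' ∈ univ.erase s, G (e s) (e s')) = ∏ j' ∈ R.erase (e s), G (e s) j' := by
      intro s
      rw [← himgR, ← Finset.image_erase heinj, Finset.prod_image (fun p _ q _ h => heinj h)]
    rw [Finset.prod_congr rfl fun s _ => inner s]
    exact hpR (fun j => ∏ j' ∈ R.erase j, G j j')
  -- scalar abbreviations
  set US : K := ∏ j ∈ S, u j with hUSdef
  set VR : K := ∏ i ∈ R, v i with hVRdef
  set XX : K := ∏ j ∈ S, ∏ i ∈ R, (a j - b i) with hXXdef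
  set AS : K := ∏ j ∈ S, ∏ j' ∈ S.erase j, (a j - a j') with hASdef
  set BR : K := ∏ i ∈ R, ∏ i' ∈ R.erase i, (b i - b i') with hBRdef
  set dCF : K := (CC.submatrix ⇑e ⇑f).det with hdCFdef
  set W1 : K := ∏ j ∈ S, ∏ i ∈ Rᶜ, (a j - b i) with hW1def
  set W2 : K := ∏ j ∈ S, ∏ m ∈ Sᶜ, (a j - a m) with hW2def
  set W3 : K := ∏ i ∈ R, ∏ m ∈ Sᶜ, (a m - b i) with hW3def
  set W4 : K := ∏ i ∈ R, ∏ m ∈ Rᶜ, (b m - b i) with hW4def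
  set DEN1 : K := ∏ i ∈ Rᶜ, ∏ j ∈ R, (b j - b i) with hDEN1def
  set DEN2 : K := ∏ i ∈ Sᶜ, ∏ j ∈ S, (a j - a i) with hDEN2def
  set NUM2 : K := ∏ i ∈ Sᶜ, ∏ j ∈ R, (b j - a i) with hNUM2def
  -- determinant of the B-minor
  have hdetB : (DD.submatrix ⇑f ⇑e).det = US * (VR * dCF) := by
    calc (DD.submatrix ⇑f ⇑e).det
        = Matrix.det (Matrix.of fun s r => u (f s) *
            ((Matrix.of fun s' r' => v (e r') * ((CC.submatrix ⇑e ⇑f)ᵀ) s' r') s r)) := rfl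
      _ = (∏ s, u (f s)) *
            Matrix.det (Matrix.of fun s' r' => v (e r') * ((CC.submatrix ⇑e ⇑f)ᵀ) s' r') :=
          Matrix.det_mul_column _ _
      _ = (∏ s, u (f s)) * ((∏ r, v (e r)) * ((CC.submatrix ⇑e ⇑f)ᵀ).det) := by
          rw [Matrix.det_mul_row]
      _ = US * (VR * dCF) := by rw [hpS u, hpR v, Matrix.det_transpose, hdCFdef]
  -- Cauchy determinant for the minor
  set x : Fin k → K := fun s => a (f s) with hx
  set y : Fin k → K := fun r => b (e r) with hy
  have hyinj : Function.Injective y := fun r r' h => e.injective (hb h)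
  have hxy : ∀ s r, x s - y r ≠ 0 := fun s r => hab' (f s) (e r)
  have hcau := det_cauchy_mul x y hyinj hxy
  have hdtrans : Matrix.det (Matrix.of fun s r => (x s - y r)⁻¹) = dCF := by
    rw [hdCFdef, ← Matrix.det_transpose (CC.submatrix ⇑e ⇑f)]
    congr 1
  rw [hdtrans] at hcau
  have hsq := sq_prod_pairs x y
  have hXF : (∏ s, ∏ r, (x s - y r)) = XX := by
    rw [hXXdef]
    calc (∏ s, ∏ r, (x s - y r)) = ∏ s : Fin k, ∏ i ∈ R, (a (f s) - b i) :=
          Finset.prod_congr rfl fun s _ => hpR (fun i => a (f s) - b i)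
      _ = ∏ j ∈ S, ∏ i ∈ R, (a j - b i) := hpS (fun j => ∏ i ∈ R, (a j - b i))
  have hPEX : (∏ s, ∏ s' ∈ univ.erase s, (x s - x s')) = AS :=
    hpeS (fun j j' => a j - a j')
  have hPEY : (∏ r, ∏ r' ∈ univ.erase r, (y r - y r')) = BR :=
    hpeR (fun j j' => b j - b j')
  have hkey : dCF^2 * XX^2 = AS * BR := by
    calc dCF^2 * XX^2 = (dCF * ∏ s, ∏ r, (x s - y r))^2 := by rw [hXF]; ring
      _ = ((∏ i, ∏ j ∈ Ioi i, (x j - x i)) * ∏ i, ∏ j ∈ Ioi i, (y i - y j))^2 := by rw [hcau]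
      _ = (∏ i, ∏ j ∈ univ.erase i, (x i - x j)) * ∏ i, ∏ j ∈ univ.erase i, (y i - y j) := hsq
      _ = AS * BR := by rw [hPEX, hPEY]
  -- splitting products over univ into set and complement
  have hsplit : ∀ (T : Finset (Fin (d+1))) (j : Fin (d+1)), j ∈ T → ∀ F : Fin (d+1) → K,
      (∏ m ∈ univ.erase j, F m) = (∏ m ∈ T.erase j, F m) * ∏ m ∈ Tᶜ, F m := by
    intro T j hj F
    have hun : univ.erase j = (T.erase j) ∪ Tᶜ := by
      ext m
      simp only [mem_erase, mem_univ, and_true, mem_union, mem_compl]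
      constructor
      · intro hm
        by_cases hmT : m ∈ T
        · exact Or.inl ⟨hm, hmT⟩
        · exact Or.inr hmT
      · rintro (⟨hm, _⟩ | hm)
        · exact hm
        · exact fun hmj => hm (hmj ▸ hj)
    rw [hun, Finset.prod_union (disjoint_compl_right.mono_left (Finset.erase_subset _ _))]
  have hUS : US = (XX * W1) * (AS * W2)⁻¹ := by
    calc US = (∏ j ∈ S, ∏ m, (a j - b m)) *
          (∏ j ∈ S, ∏ m ∈ univ.erase j, (a j - a m))⁻¹ := by
          rw [hUSdef, ← Finset.prod_inv_distrib, ← Finset.prod_mul_distrib]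
      _ = (XX * W1) * (AS * W2)⁻¹ := by
          congr 1
          · rw [hXXdef, hW1def, ← Finset.prod_mul_distrib]
            exact Finset.prod_congr rfl fun j _ => (Finset.prod_mul_prod_compl R _).symm
          · congr 1
            rw [hASdef, hW2def, ← Finset.prod_mul_distrib]
            exact Finset.prod_congr rfl fun j hj => hsplit S j hj _
  have hXXswap : (∏ i ∈ R, ∏ j ∈ S, (a j - b i)) = XX := by
    rw [hXXdef]; exact Finset.prod_comm
  have hBRswap : (∏ i ∈ R, ∏ m ∈ R.erase i, (b m - b i)) = BR := by
    rw [hBRdef]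
    refine Finset.prod_comm' fun p q => ?_
    simp only [mem_erase]
    constructor
    · rintro ⟨hp, hqp, hq⟩
      exact ⟨⟨fun h => hqp h.symm, hp⟩, hq⟩
    · rintro ⟨⟨hpq, hp⟩, hq⟩
      exact ⟨hp, fun h => hpq h.symm, hq⟩
  have hVR : VR = (XX * W3) * (BR * W4)⁻¹ := by
    calc VR = (∏ i ∈ R, ∏ m, (a m - b i)) *
          (∏ i ∈ R, ∏ m ∈ univ.erase i, (b m - b i))⁻¹ := by
          rw [hVRdef, ← Finset.prod_inv_distrib, ← Finset.prod_mul_distrib]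
      _ = (XX * W3) * (BR * W4)⁻¹ := by
          congr 1
          · rw [← hXXswap, hW3def, ← Finset.prod_mul_distrib]
            exact Finset.prod_congr rfl fun i _ => (Finset.prod_mul_prod_compl S _).symm
          · congr 1
            rw [← hBRswap, hW4def, ← Finset.prod_mul_distrib]
            exact Finset.prod_congr rfl fun i hi => hsplit R i hi _
  -- sign bookkeeping
  set ε : K := (-1 : K) ^ ((Rᶜ : Finset (Fin (d+1))).card * k) with hε
  have hcompl_card : (Sᶜ : Finset (Fin (d+1))).card = (Rᶜ : Finset (Fin (d+1))).card := by
    rw [Finset.card_compl, Finset.card_compl, hSk, hR]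
  have hW3e : W3 = ε * NUM2 := by
    calc W3 = ∏ i ∈ R, ((-1:K)^(Sᶜ : Finset (Fin (d+1))).card * ∏ m ∈ Sᶜ, (b i - a m)) := by
          rw [hW3def]
          refine Finset.prod_congr rfl fun i _ => ?_
          rw [← prod_neg_one_mul]
          exact Finset.prod_congr rfl fun m _ => by ring
      _ = ((-1:K)^(Sᶜ : Finset (Fin (d+1))).card)^(R.card) *
            ∏ i ∈ R, ∏ m ∈ Sᶜ, (b i - a m) := by
          rw [Finset.prod_mul_distrib, Finset.prod_const]
      _ = ε * NUM2 := by
          rw [← pow_mul, hcompl_card, hR, hε, hNUM2def, Finset.prod_comm]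
  have hW4e : W4 = ε * DEN1 := by
    calc W4 = ∏ i ∈ R, ((-1:K)^(Rᶜ : Finset (Fin (d+1))).card * ∏ m ∈ Rᶜ, (b i - b m)) := by
          rw [hW4def]
          refine Finset.prod_congr rfl fun i _ => ?_
          rw [← prod_neg_one_mul]
          exact Finset.prod_congr rfl fun m _ => by ring
      _ = ((-1:K)^(Rᶜ : Finset (Fin (d+1))).card)^(R.card) *
            ∏ i ∈ R, ∏ m ∈ Rᶜ, (b i - b m) := by
          rw [Finset.prod_mul_distrib, Finset.prod_const]
      _ = ε * DEN1 := by
          rw [← pow_mul, hR, hε, hDEN1def, Finset.prod_comm]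
  have hW2e : W2 = DEN2 := by
    rw [hW2def, hDEN2def]; exact Finset.prod_comm
  -- nonvanishing
  have hXXne : XX ≠ 0 := by
    rw [hXXdef]
    refine Finset.prod_ne_zero_iff.mpr fun j _ => Finset.prod_ne_zero_iff.mpr fun i _ => hab' j i
  have hASne : AS ≠ 0 := by
    rw [hASdef]
    refine Finset.prod_ne_zero_iff.mpr fun j _ => Finset.prod_ne_zero_iff.mpr fun j' hj' =>
      haa (fun h => (Finset.mem_erase.mp hj').1 h.symm)
  have hBRne : BR ≠ 0 := by
    rw [hBRdef]
    refine Finset.prod_ne_zero_iff.mpr fun i _ => Finset.prod_ne_zero_iff.mpr fun i' hi' =>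
      hbb (fun h => (Finset.mem_erase.mp hi').1 h.symm)
  have hDEN1ne : DEN1 ≠ 0 := by
    rw [hDEN1def]
    refine Finset.prod_ne_zero_iff.mpr fun i hi => Finset.prod_ne_zero_iff.mpr fun j hj =>
      hbb (fun h => (Finset.mem_compl.mp hi) (h ▸ hj))
  have hDEN2ne : DEN2 ≠ 0 := by
    rw [hDEN2def]
    refine Finset.prod_ne_zero_iff.mpr fun i hi => Finset.prod_ne_zero_iff.mpr fun j hj =>
      haa (fun h => (Finset.mem_compl.mp hi) (h ▸ hj))
  have hεne : ε ≠ 0 := pow_ne_zero _ (neg_ne_zero.mpr one_ne_zero)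
  -- assemble
  have hterm : (∏ i ∈ Rᶜ, (∏ j ∈ S, (a j - b i)) / (∏ j ∈ R, (b j - b i))) *
        (∏ i ∈ Sᶜ, (∏ j ∈ R, (b j - a i)) / (∏ j ∈ S, (a j - a i)))
      = (W1 / DEN1) * (NUM2 / DEN2) := by
    rw [Finset.prod_div_distrib, Finset.prod_div_distrib, hW1def, hDEN1def, hNUM2def, hDEN2def,
      Finset.prod_comm (s := Rᶜ) (t := S)]
  have hdetval : (A.submatrix id ⇑f).det * (B.submatrix ⇑f id).det = US * VR * dCF^2 := by
    have hsubA : A.submatrix id ⇑f = CC.submatrix ⇑e ⇑f := rfl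
    have hsubB : B.submatrix ⇑f id = DD.submatrix ⇑f ⇑e := rfl
    rw [hsubA, hsubB, hdetB, ← hdCFdef]
    ring
  rw [hterm, hdetval]
  apply mul_right_cancel₀ (pow_ne_zero 2 hXXne)
  have h9 : US * VR * dCF ^ 2 * XX ^ 2 = US * VR * (AS * BR) := by
    rw [← hkey]; ring
  rw [h9, hUS, hVR, hW3e, hW4e, hW2e]
  field_simp
end

section
/- Let K be a field, n and d positive integers, and a_1,...,a_{n+d} pairwise distinct elements of K. Then the determinant of the matrix whose rows are indexed by n-element subsets S of {1,...,n+d}, whose columns are indexed by partitions λ contained in the n×d rectangle (i.e., partitions with at most n parts each at most d), and whose (S,λ) entry is the Schur polynomial s_λ evaluated at (a_s)_{s in S}, equals plus or minus the product over 1 ≤ i < j ≤ n+d of (a_i - a_j) raised to the power binomial(n+d-2, n-1). -/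
/-!
The entry at `(S, λ)` is the minor of the Vandermonde matrix `V = (a_i ^ k)` with rows `S` and
columns the β-set `{λ_{n-1-j} + j}` of `λ`, divided by the Vandermonde determinant `Δ(a_S)`.
Since `λ ↦ β(λ)` is injective into the `n`-subsets of `{0, …, n+d-1}`, the matrix is, up to a
permutation of the columns and a rescaling of the rows, the `n`-th compound matrix `C_n(V)`.
By the Sylvester–Franke theorem `det C_n(V) = (det V) ^ C(n+d-1, n-1)`, while each pair `i < j`
lies in `C(n+d-2, n-2)` of the sets `S`, so `∏_S Δ(a_S) = ∏_{i<j} (a_j - a_i) ^ C(n+d-2, n-2)`;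
Pascal's rule leaves the exponent `C(n+d-2, n-1)`.

`C_n` is multiplicative, being the matrix of the `n`-th exterior power, so Sylvester–Franke
reduces to diagonal matrices and transvections.
-/

open Finset

/-- The Schur polynomial in `n` variables associated to a partition
`lam : Fin n → ℕ`, defined via the bialternant formula. -/
noncomputable def bialternantSchur {K : Type*} [Field K] (n : ℕ) (lam : Fin n → ℕ)
    (x : Fin n → K) : K :=
  (Matrix.det fun i j : Fin n => x i ^ (lam j + (n - 1 - (j : ℕ)))) /
    Matrix.det fun i j : Fin n => x i ^ (n - 1 - (j : ℕ))

open Matrix Set.powersetCard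

section Counting
variable {ι : Type*} [Fintype ι] {n : ℕ}

theorem card_filter_powersetCard (p : Finset ι → Prop) [DecidablePred p] :
    #{S : Set.powersetCard ι n | p S.val} = #{s ∈ univ.powersetCard n | p s} := by
  refine card_bij (fun S _ => S.val) (fun S hS => ?_) (fun _ _ _ _ => Subtype.ext) fun s hs => ?_
  · simpa using And.intro S.prop (mem_filter.mp hS).2
  · simp only [mem_filter, mem_powersetCard] at hs
    exact ⟨⟨s, hs.1.2⟩, by simpa using hs.2, rfl⟩

theorem card_filter_subset_powersetCard [DecidableEq ι] (t : Finset ι) (ht : #t ≤ n) :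
    #{S : Set.powersetCard ι n | t ⊆ S.val} = (Fintype.card ι - #t).choose (n - #t) := by
  rw [card_filter_powersetCard, card_filter_powersetCard_subset t univ n (subset_univ t) ht,
    card_univ]

theorem card_filter_pair_mem_powersetCard_add [DecidableEq ι] (hn : 0 < n) {x y : ι} (hxy : x ≠ y) :
    #{S : Set.powersetCard ι n | x ∈ S.val ∧ y ∈ S.val} + (Fintype.card ι - 2).choose (n - 1) =
      (Fintype.card ι - 1).choose (n - 1) := by
  have hpair : ∀ S : Set.powersetCard ι n, x ∈ S.val ∧ y ∈ S.val ↔ {x, y} ⊆ S.val := fun S => by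
    rw [insert_subset_iff, singleton_subset_iff]
  have h2 : 2 ≤ Fintype.card ι := by
    simpa using (card_pair hxy).symm.trans_le (card_le_univ _)
  simp_rw [hpair]
  obtain rfl | hn2 : n = 1 ∨ 2 ≤ n := by omega
  · rw [filter_false_of_mem fun S _ h => ?_]
    · simp
    · have := card_le_card h
      rw [card_pair hxy, card_eq S] at this
      omega
  · rw [card_filter_subset_powersetCard _ (by rw [card_pair hxy]; omega), card_pair hxy,
      show Fintype.card ι - 1 = Fintype.card ι - 2 + 1 by omega,
      show n - 1 = n - 2 + 1 by omega, Nat.choose_succ_succ, add_comm]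

theorem Finset.prod_prod_ite_eq_prod_pow_card {α β M : Type*} [Fintype β] [CommMonoid M]
    (s : Finset α) (q : α → β → Prop) [∀ a b, Decidable (q a b)] (g : α → M) :
    ∏ b, ∏ a ∈ s, (if q a b then g a else 1) = ∏ a ∈ s, g a ^ #{b | q a b} :=
  prod_comm.trans (prod_congr rfl fun a _ => by rw [← prod_filter, prod_const])

end Counting

section Products
variable {ι : Type*} [LinearOrder ι] {n : ℕ} {M : Type*} [CommMonoid M]

theorem prod_comp_ofFinEmbEquiv_symm (S : Set.powersetCard ι n) (f : ι → M) :
    ∏ i, f (ofFinEmbEquiv.symm S i) = ∏ x ∈ S.val, f x := by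
  rw [← prod_image fun i _ j _ h => (ofFinEmbEquiv.symm S).injective h]
  congr 1
  ext x
  simp only [mem_image, mem_univ, true_and]
  exact mem_range_ofFinEmbEquiv_symm_iff_mem S x

theorem prod_powersetCard_prod_mem [Fintype ι] (hn : 0 < n) (g : ι → M) :
    ∏ S : Set.powersetCard ι n, ∏ x ∈ S.val, g x =
      (∏ x, g x) ^ (Fintype.card ι - 1).choose (n - 1) := by
  have hite : ∀ S : Set.powersetCard ι n, ∏ x ∈ S.val, g x = ∏ x, if x ∈ S.val then g x else 1 :=
    fun S => by rw [prod_ite_mem, univ_inter]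
  rw [prod_congr rfl fun S _ => hite S, prod_prod_ite_eq_prod_pow_card, ← prod_pow]
  refine prod_congr rfl fun x _ => ?_
  rw [← card_singleton x, ← card_filter_subset_powersetCard {x} (by rwa [card_singleton])]
  simp_rw [singleton_subset_iff]

end Products

namespace Matrix
variable {R : Type*} [CommRing R] {ι : Type*} [LinearOrder ι] (n : ℕ)

def compound (X : Matrix ι ι R) : Matrix (Set.powersetCard ι n) (Set.powersetCard ι n) R :=
  of fun S T => (X.submatrix (ofFinEmbEquiv.symm S) (ofFinEmbEquiv.symm T)).det

theorem compound_eq_toMatrix_exteriorPower_map [Fintype ι] (X : Matrix ι ι R) :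
    compound n X = LinearMap.toMatrix ((Pi.basisFun R ι).exteriorPower n)
      ((Pi.basisFun R ι).exteriorPower n) (exteriorPower.map n (toLin' X)) := by
  ext S T
  rw [LinearMap.toMatrix_apply, exteriorPower.basis_apply, exteriorPower.map_apply_ιMulti_family,
    exteriorPower.basis_repr_apply, exteriorPower.ιMulti_family,
    exteriorPower.ιMultiDual_apply_ιMulti, compound, of_apply, ← det_transpose]
  congr 1
  ext i j
  simp

theorem compound_mul [Fintype ι] (X Y : Matrix ι ι R) :
    compound n (X * Y) = compound n X * compound n Y := by
  simp only [compound_eq_toMatrix_exteriorPower_map, toLin'_mul, exteriorPower.map_comp]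
  exact LinearMap.toMatrix_comp _ _ _ _ _

theorem compound_one [Fintype ι] : compound n (1 : Matrix ι ι R) = 1 := by
  simp only [compound_eq_toMatrix_exteriorPower_map, toLin'_one, exteriorPower.map_id]
  exact LinearMap.toMatrix_id _

theorem compound_diagonal (D : ι → R) :
    compound n (diagonal D) = diagonal fun S : Set.powersetCard ι n => ∏ x ∈ S.val, D x := by
  ext S T
  by_cases hST : S = T
  · subst hST
    rw [compound, of_apply, submatrix_diagonal _ _ (ofFinEmbEquiv.symm S).injective, det_diagonal,
      diagonal_apply_eq]
    exact prod_comp_ofFinEmbEquiv_symm S D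
  · rw [diagonal_apply_ne _ hST]
    obtain ⟨x, hxS, hxT⟩ := (exists_mem_notMem_iff_ne S T).mp hST
    obtain ⟨i, rfl⟩ := (mem_range_ofFinEmbEquiv_symm_iff_mem S x).mpr hxS
    refine det_eq_zero_of_row_eq_zero i fun j => diagonal_apply_ne _ fun h => hxT ?_
    exact h ▸ (mem_range_ofFinEmbEquiv_symm_iff_mem T _).mp ⟨j, rfl⟩

end Matrix

namespace Matrix
variable {K : Type*} [Field K] {ι : Type*} [LinearOrder ι] [Fintype ι] (n : ℕ)

theorem transvection_eq_diagonal_mul_transvection_one_mul_diagonal {i j : ι} (hij : i ≠ j)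
    {c : K} (hc : c ≠ 0) : transvection i j c =
      diagonal (Pi.mulSingle i c) * transvection i j 1 * diagonal (Pi.mulSingle i c⁻¹) := by
  ext k l
  simp only [mul_diagonal, diagonal_mul, transvection, add_apply, one_apply, single_apply,
    Pi.mulSingle_apply]
  split_ifs <;> grind

theorem det_compound_transvection {i j : ι} (hij : i ≠ j) (c : K) :
    (compound n (transvection i j c)).det = 1 := by
  set f : K → K := fun c => (compound n (transvection i j c)).det with hf
  have hadd : ∀ c c', f (c + c') = f c * f c' := fun c c' => by
    simp only [hf, ← transvection_mul_transvection_same i j hij, compound_mul, det_mul]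
  have hzero : f 0 = 1 := by simp only [hf, transvection_zero, compound_one, det_one]
  -- conjugating by a diagonal matrix rescales the transvection, and conjugation preserves `f`
  have hconst : ∀ c, c ≠ 0 → f c = f 1 := fun c hc => by
    have hD : diagonal (Pi.mulSingle i c⁻¹) * diagonal (Pi.mulSingle i c) = (1 : Matrix ι ι K) := by
      rw [diagonal_mul_diagonal, ← diagonal_one]
      congr 1
      ext k
      by_cases hk : k = i <;> simp [hk, hc]
    have := congrArg (fun X => (compound n X).det) hD
    simp only [compound_mul, compound_one, det_mul, det_one] at this
    simp only [hf, transvection_eq_diagonal_mul_transvection_one_mul_diagonal hij hc,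
      compound_mul, det_mul]
    linear_combination (det (compound n (transvection i j 1))) * this
  -- `f 1 ^ 2 = f 2`, which is `f 1` unless the characteristic is `2`, where it is `f 0 = 1`
  have hone : f 1 = 1 := by
    have h2 : f 1 * f 1 = f (1 + 1) := (hadd 1 1).symm
    by_cases h : (1 + 1 : K) = 0
    · rw [h, hzero] at h2
      have : (f 1 - 1) ^ 2 = 0 := by linear_combination h2 - f 1 * h + h
      exact sub_eq_zero.mp (pow_eq_zero_iff two_ne_zero |>.mp this)
    · have hne : f 1 ≠ 0 := fun h1 => by simpa [h1, hzero] using hadd 1 (-1)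
      rw [hconst _ h] at h2
      exact mul_left_cancel₀ hne (by rw [h2, mul_one])
  by_cases hc : c = 0
  · rw [hc]; exact hzero
  · exact (hconst c hc).trans hone

theorem det_compound_list_prod_transvection (L : List (TransvectionStruct ι K)) :
    (compound n (L.map TransvectionStruct.toMatrix).prod).det = 1 := by
  induction L with
  | nil => simp [compound_one]
  | cons t L ih =>
    rw [List.map_cons, List.prod_cons, compound_mul, det_mul, ih, mul_one]
    exact det_compound_transvection n t.hij t.c

/-- The Sylvester–Franke theorem. -/
theorem det_compound (hn : 0 < n) (X : Matrix ι ι K) :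
    (compound n X).det = X.det ^ (Fintype.card ι - 1).choose (n - 1) := by
  obtain ⟨L, L', D, rfl⟩ := Pivot.exists_list_transvec_mul_diagonal_mul_list_transvec X
  simp only [compound_mul, det_mul, det_compound_list_prod_transvection,
    TransvectionStruct.det_toMatrix_prod, compound_diagonal, det_diagonal, one_mul, mul_one, prod_powersetCard_prod_mem hn]

end Matrix

section Vandermonde
variable {R : Type*} [CommRing R]

theorem Matrix.det_vandermonde_eq_prod_filter_lt {m : ℕ} (v : Fin m → R) :
    (vandermonde v).det = ∏ p : Fin m × Fin m with p.1 < p.2, (v p.2 - v p.1) := by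
  rw [det_vandermonde]
  exact (prod_finset_product' _ _ _ (by simp)).symm

theorem Matrix.det_vandermonde_comp_ofFinEmbEquiv_symm {ι : Type*} [LinearOrder ι] [Fintype ι]
    {n : ℕ} (v : ι → R) (S : Set.powersetCard ι n) :
    (vandermonde (v ∘ ofFinEmbEquiv.symm S)).det =
      ∏ p : ι × ι with p.1 < p.2, if p.1 ∈ S.val ∧ p.2 ∈ S.val then v p.2 - v p.1 else 1 := by
  set s := ofFinEmbEquiv.symm S
  have hmem : ∀ x, x ∈ S.val ↔ ∃ i, s i = x := fun x =>
    (mem_range_ofFinEmbEquiv_symm_iff_mem S x).symm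
  have hpairs : ({p : ι × ι | p.1 < p.2 ∧ p.1 ∈ S.val ∧ p.2 ∈ S.val} : Finset _) =
      ({p : Fin n × Fin n | p.1 < p.2} : Finset _).map (s.toEmbedding.prodMap s.toEmbedding) := by
    ext ⟨x, y⟩
    simp only [mem_filter, mem_univ, true_and, mem_map, Function.Embedding.coe_prodMap,
      Prod.map, Prod.mk.injEq, Prod.exists, hmem]
    constructor
    · rintro ⟨hxy, ⟨i, rfl⟩, ⟨j, rfl⟩⟩
      exact ⟨i, j, s.lt_iff_lt.mp hxy, rfl, rfl⟩
    · rintro ⟨i, j, hij, rfl, rfl⟩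
      exact ⟨s.lt_iff_lt.mpr hij, ⟨i, rfl⟩, ⟨j, rfl⟩⟩
  rw [← prod_filter, filter_filter, hpairs, prod_map, det_vandermonde_eq_prod_filter_lt]
  rfl

end Vandermonde

section Beta
variable {n d : ℕ}

def betaEmbedding (lam : Fin n → ℕ) (hlam : Antitone lam) (hd : ∀ i, lam i ≤ d) :
    Fin n ↪o Fin (n + d) :=
  OrderEmbedding.ofStrictMono (fun j => ⟨lam j.rev + j, by have := hd j.rev; omega⟩)
    fun j k hjk => by
      have := hlam (Fin.rev_le_rev.mpr hjk.le)
      rw [Fin.lt_def] at hjk ⊢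
      simp only
      omega

theorem betaEmbedding_rev_val {lam : Fin n → ℕ} (hlam : Antitone lam) (hd : ∀ i, lam i ≤ d)
    (j : Fin n) : (betaEmbedding lam hlam hd j.rev : ℕ) = lam j + (n - 1 - j) := by
  change lam j.rev.rev + (j.rev : ℕ) = _
  rw [Fin.rev_rev, Fin.val_rev]
  omega

theorem betaEmbedding_injective {lam lam' : Fin n → ℕ} (hlam : Antitone lam) (hd : ∀ i, lam i ≤ d)
    (hlam' : Antitone lam') (hd' : ∀ i, lam' i ≤ d)
    (h : betaEmbedding lam hlam hd = betaEmbedding lam' hlam' hd') : lam = lam' := by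
  funext j
  have := congrArg Fin.val (DFunLike.congr_fun h j.rev)
  rw [betaEmbedding_rev_val, betaEmbedding_rev_val] at this
  omega

end Beta

section Schur
variable {K : Type*} [Field K] {n d : ℕ}

theorem det_of_pow_comp_rev (x : Fin n → K) (f : Fin n → ℕ) :
    (of fun i j => x i ^ f j.rev).det =
      Equiv.Perm.sign (Fin.revPerm : Equiv.Perm (Fin n)) * (of fun i j => x i ^ f j).det :=
  det_permute' Fin.revPerm (of fun i j => x i ^ f j)

theorem bialternantSchur_eq_div (x : Fin n → K) {lam : Fin n → ℕ} (hlam : Antitone lam)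
    (hd : ∀ i, lam i ≤ d) : bialternantSchur n lam x =
      (of fun i j => x i ^ (betaEmbedding lam hlam hd j : ℕ)).det / (vandermonde x).det := by
  have hnum : (det fun i j : Fin n => x i ^ (lam j + (n - 1 - j))) =
      Equiv.Perm.sign (Fin.revPerm : Equiv.Perm (Fin n)) *
        (of fun i j => x i ^ (betaEmbedding lam hlam hd j : ℕ)).det := by
    rw [← det_of_pow_comp_rev]
    simp only [betaEmbedding_rev_val]
    rfl
  have hden : (det fun i j : Fin n => x i ^ (n - 1 - j)) =
      Equiv.Perm.sign (Fin.revPerm : Equiv.Perm (Fin n)) * (vandermonde x).det := by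
    rw [vandermonde, ← det_of_pow_comp_rev]
    congr 2 with i j
    rw [of_apply, Fin.val_rev]
    congr 1
    omega
  have hsign : ((Equiv.Perm.sign (Fin.revPerm : Equiv.Perm (Fin n)) : ℤ) : K) ≠ 0 := by
    rcases Int.units_eq_one_or (Equiv.Perm.sign (Fin.revPerm : Equiv.Perm (Fin n))) with h | h <;>
      simp [h]
  rw [bialternantSchur, hnum, hden, mul_div_mul_left _ _ hsign]

end Schur

theorem det_vandermonde_pow_eq_prod_mul_prod {R : Type*} [CommRing R] {m n : ℕ} (hn : 0 < n)
    (v : Fin m → R) : (vandermonde v).det ^ (m - 1).choose (n - 1) =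
      (∏ S : Set.powersetCard (Fin m) n, (vandermonde (v ∘ ofFinEmbEquiv.symm S)).det) *
        ∏ p : Fin m × Fin m with p.1 < p.2, (v p.2 - v p.1) ^ (m - 2).choose (n - 1) := by
  simp only [det_vandermonde_comp_ofFinEmbEquiv_symm]
  rw [prod_prod_ite_eq_prod_pow_card, det_vandermonde_eq_prod_filter_lt, ← prod_pow,
    ← prod_mul_distrib]
  refine prod_congr rfl fun p hp => ?_
  have hcard := card_filter_pair_mem_powersetCard_add hn (mem_filter.mp hp).2.ne
  rw [Fintype.card_fin] at hcard
  rw [← pow_add, hcard]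

theorem exists_perm_det_of_bialternantSchur {K : Type*} [Field K] {n d : ℕ}
    (a : Fin (n + d) → K)
    (σ : Set.powersetCard (Fin (n + d)) n ≃ {lam : Fin n → ℕ // Antitone lam ∧ ∀ i, lam i ≤ d}) :
    ∃ τ : Equiv.Perm (Set.powersetCard (Fin (n + d)) n),
      (of fun S S' => bialternantSchur n (σ S').1 (a ∘ ofFinEmbEquiv.symm S)).det =
        (∏ S : Set.powersetCard (Fin (n + d)) n, ((vandermonde (a ∘ ofFinEmbEquiv.symm S)).det)⁻¹) *
          (Equiv.Perm.sign τ * (compound n (vandermonde a)).det) := by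
  set β := fun S' => ofFinEmbEquiv (betaEmbedding (σ S').1 (σ S').2.1 (σ S').2.2)
  have hβ : Function.Injective β := fun S T h => σ.injective <| Subtype.ext <|
    betaEmbedding_injective _ _ _ _ (ofFinEmbEquiv.injective h)
  set τ := Equiv.ofBijective β (Finite.injective_iff_bijective.mp hβ)
  refine ⟨τ, ?_⟩
  rw [← det_permute', ← det_mul_column]
  congr with S S'
  rw [bialternantSchur_eq_div _ (σ S').2.1 (σ S').2.2, div_eq_inv_mul,
    submatrix_apply, id, Equiv.ofBijective_apply, compound, of_apply, Equiv.symm_apply_apply]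
  rfl

theorem det_of_bialternantSchur {K : Type*} [Field K] {n d : ℕ} (hn : 0 < n)
    (a : Fin (n + d) → K) (ha : Function.Injective a)
    (σ : Set.powersetCard (Fin (n + d)) n ≃ {lam : Fin n → ℕ // Antitone lam ∧ ∀ i, lam i ≤ d}) :
    ∃ ε : K, (ε = 1 ∨ ε = -1) ∧
      (of fun S S' => bialternantSchur n (σ S').1 (a ∘ ofFinEmbEquiv.symm S)).det =
        ε * ∏ p : Fin (n + d) × Fin (n + d) with p.1 < p.2,
          (a p.1 - a p.2) ^ (n + d - 2).choose (n - 1) := by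
  obtain ⟨τ, hτ⟩ := exists_perm_det_of_bialternantSchur a σ
  set pairs := ({p : Fin (n + d) × Fin (n + d) | p.1 < p.2} : Finset _)
  set E := (n + d - 2).choose (n - 1)
  have hΔ : ∏ S : Set.powersetCard _ n, (vandermonde (a ∘ ofFinEmbEquiv.symm S)).det ≠ 0 :=
    prod_ne_zero_iff.mpr fun S _ =>
      det_vandermonde_ne_zero_iff.mpr (ha.comp (ofFinEmbEquiv.symm S).injective)
  have hswap : ∏ p ∈ pairs, (a p.2 - a p.1) ^ E =
      (-1) ^ (#pairs * E) * ∏ p ∈ pairs, (a p.1 - a p.2) ^ E := by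
    rw [prod_pow, prod_pow, pow_mul, ← mul_pow, ← prod_neg]
    simp only [neg_sub]
  refine ⟨Equiv.Perm.sign τ * (-1) ^ (#pairs * E), ?_, ?_⟩
  · rcases Int.units_eq_one_or (Equiv.Perm.sign τ) with h | h <;>
      rcases neg_one_pow_eq_or K (#pairs * E) with h' | h' <;> simp [h, h']
  · rw [hτ, det_compound n hn, Fintype.card_fin, det_vandermonde_pow_eq_prod_mul_prod hn,
      prod_inv_distrib, hswap]
    field_simp

theorem schur_values_determinant_general {K : Type*} [Field K] (n d : ℕ)
    (hn : 0 < n)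
    (a : Fin (n + d) → K) (ha : Function.Injective a)
    (e : {S : Finset (Fin (n + d)) // S.card = n} ≃
        {lam : Fin n → ℕ // Antitone lam ∧ ∀ i, lam i ≤ d}) :
    ∃ ε : K, (ε = 1 ∨ ε = -1) ∧
      Matrix.det (fun S S' : {S : Finset (Fin (n + d)) // S.card = n} =>
          bialternantSchur n (e S').1 fun j : Fin n => a (S.1.orderIsoOfFin S.2 j : Fin (n + d)))
        = ε * ∏ p ∈ Finset.univ.filter (fun p : Fin (n + d) × Fin (n + d) => p.1 < p.2),
            (a p.1 - a p.2) ^ Nat.choose (n + d - 2) (n - 1) := by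
  let toP : {S : Finset (Fin (n + d)) // S.card = n} ≃ Set.powersetCard (Fin (n + d)) n :=
    Equiv.subtypeEquivRight fun _ => Set.powersetCard.mem_iff.symm
  obtain ⟨ε, hε, hdet⟩ := det_of_bialternantSchur hn a ha (toP.symm.trans e)
  exact ⟨ε, hε, (det_submatrix_equiv_self toP _).trans hdet⟩

/-- Equation (2.3) of the paper: the determinant of the matrix of Schur polynomials
`s_λ(a_S)`, with rows indexed by `n`-element subsets `S` of `{1,…,n+d}` and columns
indexed by partitions `λ` in the `n × d` rectangle, equals
`± ∏_{i<j} (a_i - a_j)^{C(n+d-2, n-1)}`. -/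
theorem schur_values_determinant {K : Type*} [Field K] (n d : ℕ)
    (hn : 0 < n) (hd : 0 < d)
    (a : Fin (n + d) → K) (ha : Function.Injective a)
    (e : {S : Finset (Fin (n + d)) // S.card = n} ≃
        {lam : Fin n → ℕ // Antitone lam ∧ ∀ i, lam i ≤ d}) :
    ∃ ε : K, (ε = 1 ∨ ε = -1) ∧
      Matrix.det (fun S S' : {S : Finset (Fin (n + d)) // S.card = n} =>
          bialternantSchur n (e S').1 fun j : Fin n => a (S.1.orderIsoOfFin S.2 j : Fin (n + d)))
        = ε * ∏ p ∈ Finset.univ.filter (fun p : Fin (n + d) × Fin (n + d) => p.1 < p.2),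
            (a p.1 - a p.2) ^ Nat.choose (n + d - 2) (n - 1) :=
  schur_values_determinant_general n d hn a ha e
end

section
/- Let λ and ρ be partitions such that λ/(λ∩ρ) is a horizontal strip and ρ/(λ∩ρ) is a vertical strip. Then the number of outer corners of λ∪ρ that are addable with respect to (λ,ρ) is exactly one more than the number of inner corners of λ∩ρ that are removable with respect to (λ,ρ). -/
/-- `μ ≼ ν`: the skew shape `ν/μ` is a horizontal strip (at most one cell in each
column). Cells `(i,j)` of a Young diagram have row index `i` and column index `j`. -/
def IsHorizontalStrip (μ ν : YoungDiagram) : Prop :=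
  μ ≤ ν ∧ ∀ c₁ ∈ ν.cells \ μ.cells, ∀ c₂ ∈ ν.cells \ μ.cells, c₁.2 = c₂.2 → c₁ = c₂

/-- `μ ≼' ν`: the skew shape `ν/μ` is a vertical strip (at most one cell in each row). -/
def IsVerticalStrip (μ ν : YoungDiagram) : Prop :=
  μ ≤ ν ∧ ∀ c₁ ∈ ν.cells \ μ.cells, ∀ c₂ ∈ ν.cells \ μ.cells, c₁.1 = c₂.1 → c₁ = c₂

/-- `c` is an inner corner of `λ ⊓ ρ` which is removable with respect to `(λ,ρ)`:
removing it yields a partition `μ` with `λ/μ` a horizontal strip and `ρ/μ` a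
vertical strip. -/
def IsRemovableCorner (l r : YoungDiagram) (c : ℕ × ℕ) : Prop :=
  c ∈ (l ⊓ r).cells ∧ ∃ μ : YoungDiagram, μ.cells = (l ⊓ r).cells.erase c ∧
    IsHorizontalStrip μ l ∧ IsVerticalStrip μ r

/-- `c` is an outer corner of `λ ⊔ ρ` which is addable with respect to `(λ,ρ)`:
adding it yields a partition `ν` with `ν/λ` a vertical strip and `ν/ρ` a
horizontal strip. -/
def IsAddableCorner (l r : YoungDiagram) (c : ℕ × ℕ) : Prop :=
  c ∉ (l ⊔ r).cells ∧ ∃ ν : YoungDiagram, ν.cells = insert c (l ⊔ r).cells ∧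
    IsVerticalStrip l ν ∧ IsHorizontalStrip r ν

open YoungDiagram

section Aux

/-- membership in sdiff of cells -/
lemma aux_mem_sdiff {μ ν : YoungDiagram} {c : ℕ × ℕ} :
    c ∈ ν.cells \ μ.cells ↔ c ∈ ν ∧ c ∉ μ := by
  simp [Finset.mem_sdiff, mem_cells]

lemma aux_le_iff_rowLen {μ ν : YoungDiagram} :
    μ ≤ ν ↔ ∀ i, μ.rowLen i ≤ ν.rowLen i := by
  constructor
  · intro h i
    by_contra hlt
    push_neg at hlt
    have h1 : (i, ν.rowLen i) ∈ μ := mem_iff_lt_rowLen.2 hlt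
    have h2 : (i, ν.rowLen i) ∈ ν := h h1
    exact absurd (mem_iff_lt_rowLen.1 h2) (lt_irrefl _)
  · intro h c hc
    obtain ⟨i, j⟩ := c
    exact mem_iff_lt_rowLen.2 (lt_of_lt_of_le (mem_iff_lt_rowLen.1 hc) (h i))

lemma aux_hstrip_iff {μ ν : YoungDiagram} :
    IsHorizontalStrip μ ν ↔
      ∀ i, ν.rowLen (i + 1) ≤ μ.rowLen i ∧ μ.rowLen i ≤ ν.rowLen i := by
  constructor
  · rintro ⟨hle, hcol⟩ i
    refine ⟨?_, aux_le_iff_rowLen.1 hle i⟩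
    by_contra hlt
    push_neg at hlt
    set j := μ.rowLen i with hj
    have hμ1 : (i + 1, j) ∉ μ := by
      rw [mem_iff_lt_rowLen]
      exact fun h => absurd (lt_of_lt_of_le h (μ.rowLen_anti i (i+1) (by omega))) (lt_irrefl _)
    have hν1 : (i + 1, j) ∈ ν := mem_iff_lt_rowLen.2 hlt
    have hμ0 : (i, j) ∉ μ := by rw [mem_iff_lt_rowLen]; omega
    have hν0 : (i, j) ∈ ν :=
      mem_iff_lt_rowLen.2 (lt_of_lt_of_le hlt (ν.rowLen_anti i (i+1) (by omega)))
    have := hcol (i, j) (aux_mem_sdiff.2 ⟨hν0, hμ0⟩) (i+1, j) (aux_mem_sdiff.2 ⟨hν1, hμ1⟩) rfl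
    simp at this
  · intro h
    constructor
    · exact aux_le_iff_rowLen.2 fun i => (h i).2
    · rintro ⟨i₁, j₁⟩ hc₁ ⟨i₂, j₂⟩ hc₂ hj
      simp only at hj
      subst hj
      obtain ⟨hν₁, hμ₁⟩ := aux_mem_sdiff.1 hc₁
      obtain ⟨hν₂, hμ₂⟩ := aux_mem_sdiff.1 hc₂
      rw [mem_iff_lt_rowLen] at hν₁ hν₂ hμ₁ hμ₂
      push_neg at hμ₁ hμ₂
      -- both rows must be equal
      rcases lt_trichotomy i₁ i₂ with hlt | heq | hlt
      · exfalso
        have h1 := (h i₁).1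
        have h2 := ν.rowLen_anti (i₁ + 1) i₂ (by omega)
        omega
      · rw [heq]
      · exfalso
        have h1 := (h i₂).1
        have h2 := ν.rowLen_anti (i₂ + 1) i₁ (by omega)
        omega

lemma aux_vstrip_iff {μ ν : YoungDiagram} :
    IsVerticalStrip μ ν ↔
      ∀ i, ν.rowLen i ≤ μ.rowLen i + 1 ∧ μ.rowLen i ≤ ν.rowLen i := by
  constructor
  · rintro ⟨hle, hrow⟩ i
    refine ⟨?_, aux_le_iff_rowLen.1 hle i⟩
    by_contra hlt
    push_neg at hlt
    set j := μ.rowLen i with hj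
    have hμ0 : (i, j) ∉ μ := by rw [mem_iff_lt_rowLen]; omega
    have hμ1 : (i, j + 1) ∉ μ := by rw [mem_iff_lt_rowLen]; omega
    have hν0 : (i, j) ∈ ν := by rw [mem_iff_lt_rowLen]; omega
    have hν1 : (i, j + 1) ∈ ν := by rw [mem_iff_lt_rowLen]; omega
    have := hrow (i, j) (aux_mem_sdiff.2 ⟨hν0, hμ0⟩) (i, j+1) (aux_mem_sdiff.2 ⟨hν1, hμ1⟩) rfl
    simp at this
  · intro h
    constructor
    · exact aux_le_iff_rowLen.2 fun i => (h i).2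
    · rintro ⟨i₁, j₁⟩ hc₁ ⟨i₂, j₂⟩ hc₂ hi
      simp only at hi
      subst hi
      obtain ⟨hν₁, hμ₁⟩ := aux_mem_sdiff.1 hc₁
      obtain ⟨hν₂, hμ₂⟩ := aux_mem_sdiff.1 hc₂
      rw [mem_iff_lt_rowLen] at hν₁ hν₂ hμ₁ hμ₂
      push_neg at hμ₁ hμ₂
      have := (h i₁).1
      have : j₁ = j₂ := by omega
      rw [this]

lemma aux_rowLen_inf (l r : YoungDiagram) (i : ℕ) :
    (l ⊓ r).rowLen i = min (l.rowLen i) (r.rowLen i) := by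
  refine eq_of_forall_lt_iff fun k => ?_
  rw [← mem_iff_lt_rowLen, mem_inf, mem_iff_lt_rowLen, mem_iff_lt_rowLen, lt_min_iff]

lemma aux_rowLen_sup (l r : YoungDiagram) (i : ℕ) :
    (l ⊔ r).rowLen i = max (l.rowLen i) (r.rowLen i) := by
  refine eq_of_forall_lt_iff fun k => ?_
  rw [← mem_iff_lt_rowLen, mem_sup, mem_iff_lt_rowLen, mem_iff_lt_rowLen, lt_max_iff]

end Aux

section Char

variable {l r : YoungDiagram}

/-- Characterization of removable corners via row lengths. -/
lemma aux_removable_iff (h1 : IsHorizontalStrip (l ⊓ r) l) (h2 : IsVerticalStrip (l ⊓ r) r)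
    (c : ℕ × ℕ) :
    IsRemovableCorner l r c ↔
      (r.rowLen c.1 ≤ l.rowLen c.1 ∧ l.rowLen (c.1 + 1) < r.rowLen c.1 ∧
        c.2 = r.rowLen c.1 - 1) := by
  obtain ⟨i, j⟩ := c
  simp only
  constructor
  · rintro ⟨hc, μ, hμ, hs1, hs2⟩
    have hmemμ : ∀ x : ℕ × ℕ, x ∈ μ ↔ x ≠ (i, j) ∧ x ∈ (l ⊓ r) := by
      intro x
      rw [← mem_cells, hμ, Finset.mem_erase, mem_cells]
    have hκmem : (i, j) ∈ l ⊓ r := (mem_cells _).1 hc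
    -- (i, j+1) ∉ l ⊓ r
    have hnot : (i, j + 1) ∉ l ⊓ r := by
      intro hmem
      have h1' : (i, j + 1) ∈ μ := (hmemμ _).2 ⟨by simp, hmem⟩
      have h2' : (i, j) ∈ μ := μ.up_left_mem le_rfl (by omega) h1'
      have := ((hmemμ _).1 h2').1
      simp at this
    -- numeric facts
    have hκi : (l ⊓ r).rowLen i = j + 1 := by
      have ha := mem_iff_lt_rowLen.1 hκmem
      have hb : ¬ (j + 1 < (l ⊓ r).rowLen i) := fun h => hnot (mem_iff_lt_rowLen.2 h)
      omega
    have hμi : μ.rowLen i = j := by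
      have ha : (i, j) ∉ μ := fun h => by simpa using ((hmemμ _).1 h).1
      rw [mem_iff_lt_rowLen] at ha
      have hb : ∀ k, k < j → (i, k) ∈ μ := by
        intro k hk
        exact (hmemμ _).2 ⟨by simp; omega, (l ⊓ r).up_left_mem le_rfl (by omega) hκmem⟩
      rcases Nat.eq_zero_or_pos j with hj | hj
      · omega
      · have := mem_iff_lt_rowLen.1 (hb (j - 1) (by omega))
        omega
    have hgs1 := (aux_hstrip_iff.1 hs1 i).1
    have hgs2 := (aux_vstrip_iff.1 hs2 i).1
    have hmin := aux_rowLen_inf l r i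
    have hllt : j < l.rowLen i := mem_iff_lt_rowLen.1 (mem_inf.1 hκmem).1
    have hrlt : j < r.rowLen i := mem_iff_lt_rowLen.1 (mem_inf.1 hκmem).2
    -- r.rowLen i = j + 1
    have hri : r.rowLen i = j + 1 := by omega
    refine ⟨by omega, by omega, by omega⟩
  · rintro ⟨hs, hg, hj⟩
    have hrpos : 0 < r.rowLen i := by omega
    have hji : j + 1 = r.rowLen i := by omega
    have hκmem : (i, j) ∈ l ⊓ r := mem_inf.2 ⟨mem_iff_lt_rowLen.2 (by omega),
      mem_iff_lt_rowLen.2 (by omega)⟩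
    have hA : ∀ i', l.rowLen (i' + 1) ≤ (l ⊓ r).rowLen i' := fun i' =>
      (aux_hstrip_iff.1 h1 i').1
    have hB : ∀ i', r.rowLen i' ≤ (l ⊓ r).rowLen i' + 1 := fun i' =>
      (aux_vstrip_iff.1 h2 i').1
    -- construct μ
    have hlower : IsLowerSet (((l ⊓ r).cells.erase (i, j) : Finset (ℕ × ℕ)) : Set (ℕ × ℕ)) := by
      rintro ⟨a, b⟩ ⟨p, q⟩ hle hab
      simp only [Finset.coe_erase, Set.mem_diff, Finset.mem_coe, mem_cells,
        Set.mem_singleton_iff] at hab ⊢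
      obtain ⟨hab, habne⟩ := hab
      obtain ⟨hpa, hqb⟩ : p ≤ a ∧ q ≤ b := Prod.mk_le_mk.1 hle
      refine ⟨(l ⊓ r).up_left_mem hpa hqb hab, ?_⟩
      intro hpq
      injection hpq with hp hq
      -- hence i ≤ a, j ≤ b, (a,b) ∈ l ⊓ r, (a,b) ≠ (i,j)
      rcases Nat.lt_or_ge i a with hlt | hge
      · -- i < a
        have hb1 : b < l.rowLen a := mem_iff_lt_rowLen.1 (mem_inf.1 hab).1
        have hb2 : l.rowLen a ≤ l.rowLen (i + 1) := l.rowLen_anti _ _ (by omega)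
        omega
      · -- a = i : then b < r.rowLen i = j + 1, so b = j, contradiction
        have hai : a = i := by omega
        have hb1 : b < r.rowLen a := mem_iff_lt_rowLen.1 (mem_inf.1 hab).2
        rw [hai] at hb1
        have : b = j := by omega
        exact habne (by rw [hai, this])
    set μ : YoungDiagram := ⟨(l ⊓ r).cells.erase (i, j), hlower⟩ with hμdef
    have hmemμ : ∀ x : ℕ × ℕ, x ∈ μ ↔ x ≠ (i, j) ∧ x ∈ (l ⊓ r) := by
      intro x
      rw [← mem_cells]
      show x ∈ (l ⊓ r).cells.erase (i, j) ↔ _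
      rw [Finset.mem_erase, mem_cells]
    have hμrow : ∀ i', μ.rowLen i' = if i' = i then j else (l ⊓ r).rowLen i' := by
      intro i'
      refine eq_of_forall_lt_iff fun k => ?_
      rw [← mem_iff_lt_rowLen, hmemμ]
      split_ifs with hii
      · subst hii
        rw [mem_iff_lt_rowLen, aux_rowLen_inf]
        constructor
        · rintro ⟨hne, hk⟩
          have : k ≠ j := fun h => hne (by rw [h])
          omega
        · intro hk
          refine ⟨?_, by omega⟩
          simp only [ne_eq, Prod.mk.injEq]
          omega
      · rw [mem_iff_lt_rowLen]
        constructor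
        · exact fun h => h.2
        · intro h
          exact ⟨fun he => hii (by injection he), h⟩
    refine ⟨(mem_cells _).2 hκmem, μ, rfl, ?_, ?_⟩
    · rw [aux_hstrip_iff]
      intro i'
      rw [hμrow i']
      have := aux_rowLen_inf l r i'
      have := hA i'
      split_ifs with h1'
      · subst h1'
        omega
      · omega
    · rw [aux_vstrip_iff]
      intro i'
      rw [hμrow i']
      split_ifs with h1'
      · subst h1'
        omega
      · have := aux_rowLen_inf l r i'
        have := hB i'
        omega

/-- Characterization of addable corners via row lengths. -/
lemma aux_addable_iff (h1 : IsHorizontalStrip (l ⊓ r) l) (h2 : IsVerticalStrip (l ⊓ r) r)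
    (c : ℕ × ℕ) :
    IsAddableCorner l r c ↔
      (r.rowLen c.1 ≤ l.rowLen c.1 ∧ (0 < c.1 → l.rowLen c.1 < r.rowLen (c.1 - 1)) ∧
        c.2 = l.rowLen c.1) := by
  obtain ⟨i, j⟩ := c
  simp only
  have hA : ∀ i', l.rowLen (i' + 1) ≤ r.rowLen i' := by
    intro i'
    have := (aux_hstrip_iff.1 h1 i').1
    have := aux_rowLen_inf l r i'
    omega
  have hB : ∀ i', r.rowLen i' ≤ l.rowLen i' + 1 := by
    intro i'
    have := (aux_vstrip_iff.1 h2 i').1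
    have := aux_rowLen_inf l r i'
    omega
  constructor
  · rintro ⟨hc, ν, hν, hs1, hs2⟩
    rw [mem_cells] at hc
    have hmemν : ∀ x : ℕ × ℕ, x ∈ ν ↔ x = (i, j) ∨ x ∈ (l ⊔ r) := by
      intro x
      rw [← mem_cells, hν, Finset.mem_insert, mem_cells]
    have hsupi := aux_rowLen_sup l r i
    have hjge : (l ⊔ r).rowLen i ≤ j := by
      rw [mem_iff_lt_rowLen] at hc
      omega
    have hjeq : j = (l ⊔ r).rowLen i := by
      by_contra hne
      have hlt : (l ⊔ r).rowLen i < j := by omega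
      have hin : (i, j) ∈ ν := (hmemν _).2 (Or.inl rfl)
      have hin2 : (i, (l ⊔ r).rowLen i) ∈ ν := ν.up_left_mem le_rfl (by omega) hin
      rcases (hmemν _).1 hin2 with he | hm
      · have : (l ⊔ r).rowLen i = j := by injection he with h1 h2
        omega
      · rw [mem_iff_lt_rowLen] at hm
        omega
    have hνrowi : ν.rowLen i = j + 1 := by
      have ha : (i, j) ∈ ν := (hmemν _).2 (Or.inl rfl)
      have hb : (i, j + 1) ∉ ν := by
        rw [hmemν]
        rintro (he | hm)
        · have : j + 1 = j := by injection he with h1 h2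
          omega
        · rw [mem_iff_lt_rowLen] at hm
          omega
      rw [mem_iff_lt_rowLen] at ha
      rw [mem_iff_lt_rowLen] at hb
      omega
    have hv := (aux_vstrip_iff.1 hs1 i).1
    have hs : r.rowLen i ≤ l.rowLen i := by omega
    refine ⟨hs, ?_, by omega⟩
    intro hpos
    have hh := (aux_hstrip_iff.1 hs2 (i - 1)).1
    have : i - 1 + 1 = i := by omega
    rw [this, hνrowi] at hh
    omega
  · rintro ⟨hs, hg, hj⟩
    have hsupi := aux_rowLen_sup l r i
    have hc : (i, j) ∉ l ⊔ r := by
      rw [mem_iff_lt_rowLen]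
      omega
    have hlower : IsLowerSet ((insert (i, j) (l ⊔ r).cells : Finset (ℕ × ℕ)) : Set (ℕ × ℕ)) := by
      rintro ⟨a, b⟩ ⟨p, q⟩ hle hab
      simp only [Finset.coe_insert, Set.mem_insert_iff, Finset.mem_coe, mem_cells] at hab ⊢
      obtain ⟨hpa, hqb⟩ : p ≤ a ∧ q ≤ b := Prod.mk_le_mk.1 hle
      rcases hab with he | hm
      · injection he with ha hb
        by_cases hpq : (p, q) = (i, j)
        · exact Or.inl hpq
        · right
          rw [mem_sup]
          rcases Nat.lt_or_ge p i with hlt | hge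
          · -- p < i : use the gate
            have hgi := hg (by omega)
            have hrp : r.rowLen (i - 1) ≤ r.rowLen p := r.rowLen_anti _ _ (by omega)
            right
            rw [mem_iff_lt_rowLen]
            omega
          · -- p = i
            have hpi : p = i := by omega
            have hqj : q ≠ j := fun h => hpq (by rw [hpi, h])
            left
            rw [mem_iff_lt_rowLen, hpi]
            omega
      · exact Or.inr ((l ⊔ r).up_left_mem hpa hqb hm)
    set ν : YoungDiagram := ⟨insert (i, j) (l ⊔ r).cells, hlower⟩ with hνdef
    have hmemν : ∀ x : ℕ × ℕ, x ∈ ν ↔ x = (i, j) ∨ x ∈ (l ⊔ r) := by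
      intro x
      rw [← mem_cells]
      show x ∈ insert (i, j) (l ⊔ r).cells ↔ _
      rw [Finset.mem_insert, mem_cells]
    have hνrow : ∀ i', ν.rowLen i' = if i' = i then j + 1 else (l ⊔ r).rowLen i' := by
      intro i'
      refine eq_of_forall_lt_iff fun k => ?_
      rw [← mem_iff_lt_rowLen, hmemν]
      split_ifs with hii
      · subst hii
        rw [mem_iff_lt_rowLen]
        constructor
        · rintro (he | hm)
          · have : k = j := by injection he with h1 h2
            omega
          · omega
        · intro hk
          by_cases hkj : k = j
          · left; rw [hkj]
          · right; omega
      · rw [mem_iff_lt_rowLen]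
        constructor
        · rintro (he | hm)
          · exfalso; apply hii; injection he
          · exact hm
        · exact fun h => Or.inr h
    refine ⟨fun h => hc ((mem_cells _).1 h), ν, rfl, ?_, ?_⟩
    · rw [aux_vstrip_iff]
      intro i'
      rw [hνrow i']
      split_ifs with h1'
      · subst h1'
        omega
      · have := aux_rowLen_sup l r i'
        have := hB i'
        omega
    · rw [aux_hstrip_iff]
      intro i'
      rw [hνrow i', hνrow (i' + 1)]
      have hsup' := aux_rowLen_sup l r i'
      have hsup1 := aux_rowLen_sup l r (i' + 1)
      have hra := r.rowLen_anti i' (i' + 1) (by omega)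
      have hhA := hA i'
      by_cases h2' : i' + 1 = i
      · have hgi := hg (by omega)
        have heq : i - 1 = i' := by omega
        rw [heq] at hgi
        rw [if_pos h2', if_neg (by omega)]
        omega
      · rw [if_neg h2']
        by_cases h1' : i' = i
        · rw [if_pos h1']
          subst h1'
          omega
        · rw [if_neg h1']
          omega

end Char

section Count

/-- The telescoping count. -/
lemma aux_count (f g : ℕ → ℕ) (hf : ∀ i, f (i + 1) ≤ f i) (hg : ∀ i, g (i + 1) ≤ g i) :
    ∀ n, ((Finset.range (n + 1)).filter
        (fun i => g i ≤ f i ∧ (0 < i → f i < g (i - 1)))).card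
      = ((Finset.range n).filter (fun i => g i ≤ f i ∧ f (i + 1) < g i)).card
        + (if g n ≤ f n then 1 else 0) := by
  intro n
  induction n with
  | zero =>
    rw [Finset.range_one, Finset.filter_singleton]
    by_cases hs : g 0 ≤ f 0
    · rw [if_pos ⟨hs, fun h => absurd h (lt_irrefl 0)⟩, if_pos hs]
      simp
    · rw [if_neg (fun h => hs h.1), if_neg hs]
      simp
  | succ n ih =>
    have e1 : ((Finset.range (n + 1 + 1)).filter
          (fun i => g i ≤ f i ∧ (0 < i → f i < g (i - 1)))).card
        = ((Finset.range (n + 1)).filter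
            (fun i => g i ≤ f i ∧ (0 < i → f i < g (i - 1)))).card
          + (if (g (n + 1) ≤ f (n + 1) ∧ (0 < n + 1 → f (n + 1) < g (n + 1 - 1)))
              then 1 else 0) := by
      rw [Finset.range_add_one, Finset.filter_insert]
      split_ifs with h
      · rw [Finset.card_insert_of_notMem
          (fun hmem => absurd (Finset.mem_range.1 (Finset.mem_filter.1 hmem).1) (by omega))]
      · simp
    have e2 : ((Finset.range (n + 1)).filter
          (fun i => g i ≤ f i ∧ f (i + 1) < g i)).card
        = ((Finset.range n).filter (fun i => g i ≤ f i ∧ f (i + 1) < g i)).card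
          + (if (g n ≤ f n ∧ f (n + 1) < g n) then 1 else 0) := by
      rw [Finset.range_add_one, Finset.filter_insert]
      split_ifs with h
      · rw [Finset.card_insert_of_notMem
          (fun hmem => absurd (Finset.mem_range.1 (Finset.mem_filter.1 hmem).1) (by omega))]
      · simp
    rw [e1, e2, ih]
    have key : (if (g (n + 1) ≤ f (n + 1) ∧ (0 < n + 1 → f (n + 1) < g (n + 1 - 1)))
          then 1 else 0) + (if g n ≤ f n then 1 else 0)
        = (if (g n ≤ f n ∧ f (n + 1) < g n) then 1 else 0)
          + (if g (n + 1) ≤ f (n + 1) then 1 else 0) := by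
      by_cases hgate : f (n + 1) < g n
      · have hb : (0 < n + 1 → f (n + 1) < g (n + 1 - 1)) := by
          intro _
          simpa using hgate
        rw [if_congr (and_iff_left hb) rfl rfl, if_congr (and_iff_left hgate) rfl rfl]
        split_ifs <;> omega
      · have hs1 : g (n + 1) ≤ f (n + 1) := le_trans (hg n) (by omega)
        have hs0 : g n ≤ f n := le_trans (by omega) (hf n)
        have hc1 : ¬ (g (n + 1) ≤ f (n + 1) ∧ (0 < n + 1 → f (n + 1) < g (n + 1 - 1))) := by
          rintro ⟨-, hb⟩
          exact hgate (by simpa using hb (by omega))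
        have hc2 : ¬ (g n ≤ f n ∧ f (n + 1) < g n) := fun h => hgate h.2
        rw [if_neg hc1, if_neg hc2, if_pos hs0, if_pos hs1]
    omega

end Count

/-- If `λ/(λ∩ρ)` is a horizontal strip and `ρ/(λ∩ρ)` is a vertical strip, then
`λ ⊔ ρ` has exactly one more addable outer corner (w.r.t. `(λ,ρ)`) than `λ ⊓ ρ`
has removable inner corners. -/
theorem card_addable_eq_card_removable_add_one (l r : YoungDiagram)
    (h1 : IsHorizontalStrip (l ⊓ r) l) (h2 : IsVerticalStrip (l ⊓ r) r) :
    {c : ℕ × ℕ | IsAddableCorner l r c}.ncard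
      = {c : ℕ × ℕ | IsRemovableCorner l r c}.ncard + 1 := by
  set N := max (l.colLen 0) (r.colLen 0) with hN
  have hzero : ∀ i, N ≤ i → l.rowLen i = 0 ∧ r.rowLen i = 0 := by
    intro i hi
    constructor
    · by_contra h
      have : (i, 0) ∈ l := mem_iff_lt_rowLen.2 (by omega)
      have := mem_iff_lt_colLen.1 this
      omega
    · by_contra h
      have : (i, 0) ∈ r := mem_iff_lt_rowLen.2 (by omega)
      have := mem_iff_lt_colLen.1 this
      omega
  -- addable set as finset image
  have hAset : {c : ℕ × ℕ | IsAddableCorner l r c}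
      = ↑(((Finset.range (N + 1)).filter
            (fun i => r.rowLen i ≤ l.rowLen i ∧ (0 < i → l.rowLen i < r.rowLen (i - 1)))).image
          (fun i => (i, l.rowLen i))) := by
    ext ⟨i, j⟩
    simp only [Set.mem_setOf_eq, Finset.coe_image, Set.mem_image, Finset.mem_coe,
      Finset.mem_filter, Finset.mem_range, aux_addable_iff h1 h2, Prod.mk.injEq]
    constructor
    · rintro ⟨hs, hg, hj⟩
      refine ⟨i, ⟨?_, hs, hg⟩, rfl, hj.symm⟩
      by_contra hge
      push_neg at hge
      have hi1 : 0 < i := by omega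
      have := hg hi1
      have := (hzero (i - 1) (by omega)).2
      omega
    · rintro ⟨i', ⟨_, hs, hg⟩, rfl, rfl⟩
      exact ⟨hs, hg, rfl⟩
  have hRset : {c : ℕ × ℕ | IsRemovableCorner l r c}
      = ↑(((Finset.range N).filter
            (fun i => r.rowLen i ≤ l.rowLen i ∧ l.rowLen (i + 1) < r.rowLen i)).image
          (fun i => (i, r.rowLen i - 1))) := by
    ext ⟨i, j⟩
    simp only [Set.mem_setOf_eq, Finset.coe_image, Set.mem_image, Finset.mem_coe,
      Finset.mem_filter, Finset.mem_range, aux_removable_iff h1 h2, Prod.mk.injEq]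
    constructor
    · rintro ⟨hs, hg, hj⟩
      refine ⟨i, ⟨?_, hs, hg⟩, rfl, hj.symm⟩
      by_contra hge
      push_neg at hge
      have := (hzero i (by omega)).2
      omega
    · rintro ⟨i', ⟨_, hs, hg⟩, rfl, rfl⟩
      exact ⟨hs, hg, rfl⟩
  rw [hAset, hRset, Set.ncard_coe_finset, Set.ncard_coe_finset,
    Finset.card_image_of_injective _ (fun a b h => by injection h),
    Finset.card_image_of_injective _ (fun a b h => by injection h)]
  have := aux_count l.rowLen r.rowLen
    (fun i => l.rowLen_anti i (i + 1) (by omega))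
    (fun i => r.rowLen_anti i (i + 1) (by omega)) N
  rw [this, if_pos (by have := (hzero N le_rfl).2; omega)]
end

section
/- Define Q-linear operators U_x, D*_y on the vector space of formal power series in x, y with coefficients in the free Q-vector space on partitions by: U_x λ = sum over partitions ν such that ν/λ is a horizontal strip of x^{|ν/λ|}·ν, and D*_y λ = sum over partitions μ ⊆ λ such that λ/μ is a vertical strip of y^{|λ/μ|}·μ. Then D*_y ∘ U_x = (1+xy)·(U_x ∘ D*_y). -/
/-!
In column lengths, `ν/λ` is a horizontal strip iff `λ'_j ≤ ν'_j ≤ λ'_j + 1`, and `ν/κ` is a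
vertical strip iff `κ'_j ≤ ν'_j` and `ν'_{j+1} ≤ κ'_j`. So on either side the column lengths of
the diagram being counted are confined, column by column, to intervals of length at most one, and
every choice within them is again a partition; each count is therefore a binomial coefficient
`C(n, r)` with `n` the number of columns offering a choice. The columns where `κ` sticks out of
`λ` are forced on both sides, and summing the interval bounds shows that the left side has exactly
one more free column than the right, so the identity is Pascal's rule.
-/

open Finset

namespace YoungDiagram

theorem le_iff_colLen_le {μ ν : YoungDiagram} : μ ≤ ν ↔ ∀ j, μ.colLen j ≤ ν.colLen j := by
  refine ⟨fun h j => ?_, fun h ⟨i, j⟩ hij => ?_⟩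
  · by_contra! hlt
    exact (mem_iff_lt_colLen.1 (h (mem_iff_lt_colLen.2 hlt))).false
  · exact mem_iff_lt_colLen.2 ((mem_iff_lt_colLen.1 hij).trans_le (h j))

theorem ext_colLen {μ ν : YoungDiagram} (h : ∀ j, μ.colLen j = ν.colLen j) : μ = ν :=
  le_antisymm (le_iff_colLen_le.2 fun j => (h j).le) (le_iff_colLen_le.2 fun j => (h j).ge)

theorem colLen_eq_zero_of_rowLen_le {μ : YoungDiagram} {j : ℕ} (hj : μ.rowLen 0 ≤ j) :
    μ.colLen j = 0 := by
  by_contra! h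
  exact (mem_iff_lt_rowLen.1 (mem_iff_lt_colLen.2 (Nat.pos_of_ne_zero h))).not_ge hj

theorem card_cells_eq_sum_colLen (μ : YoungDiagram) {N : ℕ} (hN : μ.colLen N = 0) :
    #μ.cells = ∑ j ∈ range N, μ.colLen j := by
  classical
  refine (card_eq_sum_card_fiberwise fun c hc => mem_range.2 ?_).trans
    (sum_congr rfl fun j _ => (colLen_eq_card μ).symm)
  by_contra! hNc
  have := μ.colLen_anti _ _ hNc
  have := mem_iff_lt_colLen.1 ((mem_cells c).1 hc)
  omega

def ofColLen (c : ℕ → ℕ) (hc : Antitone c) (N : ℕ) : YoungDiagram where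
  cells := (range (c 0) ×ˢ range N).filter fun p => p.1 < c p.2
  isLowerSet := by
    rintro ⟨i₂, j₂⟩ ⟨i₁, j₁⟩ ⟨hi, hj⟩ hmem
    simp only [coe_filter, mem_product, mem_range, Set.mem_ofPred_eq] at hmem ⊢
    have hlt : i₁ < c j₁ := hi.trans_lt (hmem.2.trans_le (hc hj))
    exact ⟨⟨hlt.trans_le (hc (Nat.zero_le _)), hj.trans_lt hmem.1.2⟩, hlt⟩

theorem mem_ofColLen {c : ℕ → ℕ} {hc : Antitone c} {N : ℕ} (hN : c N = 0) {i j : ℕ} :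
    (i, j) ∈ ofColLen c hc N ↔ i < c j := by
  rw [← mem_cells]
  simp only [ofColLen, mem_filter, mem_product, mem_range]
  refine ⟨fun h => h.2, fun h => ⟨⟨h.trans_le (hc (Nat.zero_le _)), ?_⟩, h⟩⟩
  by_contra! hNj
  have := hc hNj
  omega

theorem colLen_ofColLen {c : ℕ → ℕ} {hc : Antitone c} {N : ℕ} (hN : c N = 0) (j : ℕ) :
    (ofColLen c hc N).colLen j = c j :=
  eq_of_forall_lt_iff fun i => by rw [← mem_iff_lt_colLen, mem_ofColLen hN]

theorem mk_mem_cells_sdiff_iff {μ ν : YoungDiagram} {i j : ℕ} :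
    (i, j) ∈ ν.cells \ μ.cells ↔ μ.colLen j ≤ i ∧ i < ν.colLen j := by
  simp only [mem_sdiff, mem_cells, mem_iff_lt_colLen, not_lt, and_comm]

end YoungDiagram

open YoungDiagram

theorem isHorizontalStrip_iff_colLen {μ ν : YoungDiagram} :
    IsHorizontalStrip μ ν ↔ ∀ j, μ.colLen j ≤ ν.colLen j ∧ ν.colLen j ≤ μ.colLen j + 1 := by
  constructor
  · rintro ⟨hle, hcol⟩ j
    refine ⟨le_iff_colLen_le.1 hle j, ?_⟩
    by_contra! h
    have := hcol (μ.colLen j, j) (mk_mem_cells_sdiff_iff.2 (by omega))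
      (μ.colLen j + 1, j) (mk_mem_cells_sdiff_iff.2 (by omega)) rfl
    simp at this
  · intro h
    refine ⟨le_iff_colLen_le.2 fun j => (h j).1, ?_⟩
    rintro ⟨i₁, j⟩ h₁ ⟨i₂, j'⟩ h₂ (rfl : j = j')
    rw [mk_mem_cells_sdiff_iff] at h₁ h₂
    have := h j
    rw [show i₁ = i₂ by omega]

theorem isVerticalStrip_iff_colLen {μ ν : YoungDiagram} :
    IsVerticalStrip μ ν ↔ ∀ j, μ.colLen j ≤ ν.colLen j ∧ ν.colLen (j + 1) ≤ μ.colLen j := by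
  constructor
  · rintro ⟨hle, hrow⟩ j
    refine ⟨le_iff_colLen_le.1 hle j, ?_⟩
    by_contra! h
    have := μ.colLen_anti j (j + 1) j.le_succ
    have := ν.colLen_anti j (j + 1) j.le_succ
    have := hrow (μ.colLen j, j) (mk_mem_cells_sdiff_iff.2 (by omega))
      (μ.colLen j, j + 1) (mk_mem_cells_sdiff_iff.2 (by omega)) rfl
    simp at this
  · intro h
    refine ⟨le_iff_colLen_le.2 fun j => (h j).1, ?_⟩
    -- new cells `(i, j₁)`, `(i, j₂)` with `j₁ < j₂` give `μ'_{j₁} ≤ i < ν'_{j₂} ≤ ν'_{j₁+1}`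
    have key : ∀ i j₁ j₂, (i, j₁) ∈ ν.cells \ μ.cells → (i, j₂) ∈ ν.cells \ μ.cells → j₂ ≤ j₁ := by
      intro i j₁ j₂ h₁ h₂
      by_contra! hlt
      rw [mk_mem_cells_sdiff_iff] at h₁ h₂
      have := ν.colLen_anti (j₁ + 1) j₂ hlt
      have := h j₁
      omega
    rintro ⟨i, j₁⟩ h₁ ⟨i', j₂⟩ h₂ (rfl : i = i')
    rw [le_antisymm (key i j₂ j₁ h₂ h₁) (key i j₁ j₂ h₁ h₂)]

/-- `hi_succ_le_lo` makes every choice of column lengths within the bounds antitone, i.e. the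
column lengths of a diagram. -/
structure ColLenBounds where
  lo : ℕ → ℕ
  hi : ℕ → ℕ
  len : ℕ
  lo_le_hi : ∀ j, lo j ≤ hi j
  hi_le_lo_add_one : ∀ j, hi j ≤ lo j + 1
  hi_succ_le_lo : ∀ j, hi (j + 1) ≤ lo j
  hi_len : hi len = 0

namespace ColLenBounds

variable (B : ColLenBounds)

def box : Set YoungDiagram := {ν | ∀ j, B.lo j ≤ ν.colLen j ∧ ν.colLen j ≤ B.hi j}

def slack : Finset ℕ := (range B.len).filter fun j => B.lo j < B.hi j

theorem hi_eq_zero {j : ℕ} (hj : B.len ≤ j) : B.hi j = 0 := by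
  have hanti : Antitone B.hi := antitone_nat_of_succ_le fun j =>
    (B.hi_succ_le_lo j).trans (B.lo_le_hi j)
  simpa [B.hi_len] using hanti hj

theorem lo_eq_hi_of_notMem_slack {j : ℕ} (hj : j ∉ B.slack) : B.lo j = B.hi j := by
  simp only [slack, mem_filter, mem_range, not_and, not_lt] at hj
  by_cases hjN : j < B.len
  · exact le_antisymm (B.lo_le_hi j) (hj hjN)
  · have := B.hi_eq_zero (not_lt.1 hjN)
    have := B.lo_le_hi j
    omega

theorem sum_hi : ∑ j ∈ range B.len, B.hi j = ∑ j ∈ range B.len, B.lo j + #B.slack := by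
  rw [slack, card_filter, ← sum_add_distrib]
  refine sum_congr rfl fun j _ => ?_
  have := B.lo_le_hi j
  have := B.hi_le_lo_add_one j
  split_ifs <;> omega

def select (S : Finset ℕ) (j : ℕ) : ℕ := if j ∈ S then B.hi j else B.lo j

theorem select_antitone (S : Finset ℕ) : Antitone (B.select S) :=
  antitone_nat_of_succ_le fun j => by
    have := B.hi_succ_le_lo j
    have := B.lo_le_hi j
    have := B.lo_le_hi (j + 1)
    unfold select
    split_ifs <;> omega

theorem select_len (S : Finset ℕ) : B.select S B.len = 0 := by
  have := B.lo_le_hi B.len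
  have := B.hi_len
  unfold select
  split_ifs <;> omega

def diagram (S : Finset ℕ) : YoungDiagram := ofColLen (B.select S) (B.select_antitone S) B.len

theorem colLen_diagram (S : Finset ℕ) (j : ℕ) : (B.diagram S).colLen j = B.select S j :=
  colLen_ofColLen (B.select_len S) j

theorem diagram_mem_box (S : Finset ℕ) : B.diagram S ∈ B.box := fun j => by
  have := B.lo_le_hi j
  rw [colLen_diagram, select]
  split_ifs <;> omega

theorem card_cells_diagram {S : Finset ℕ} (hS : S ⊆ B.slack) :
    #(B.diagram S).cells = ∑ j ∈ range B.len, B.lo j + #S := by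
  have hcard : #S = ∑ j ∈ range B.len, if j ∈ S then 1 else 0 := by
    rw [← card_filter, filter_mem_eq_inter, inter_eq_right.2 (hS.trans (filter_subset _ _))]
  rw [card_cells_eq_sum_colLen _ (by rw [colLen_diagram]; exact B.select_len S), hcard,
    ← sum_add_distrib]
  refine sum_congr rfl fun j _ => ?_
  rw [colLen_diagram, select]
  split_ifs with hj
  · have := (mem_filter.1 (hS hj)).2
    have := B.hi_le_lo_add_one j
    omega
  · rfl

def topCols (ν : YoungDiagram) : Finset ℕ := B.slack.filter fun j => ν.colLen j = B.hi j

theorem topCols_subset (ν : YoungDiagram) : B.topCols ν ⊆ B.slack := filter_subset _ _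

theorem topCols_diagram {S : Finset ℕ} (hS : S ⊆ B.slack) : B.topCols (B.diagram S) = S := by
  ext j
  simp only [topCols, mem_filter, colLen_diagram, select]
  constructor
  · rintro ⟨hj, hsel⟩
    by_contra hjS
    rw [if_neg hjS] at hsel
    exact (mem_filter.1 hj).2.ne hsel
  · intro hjS
    exact ⟨hS hjS, if_pos hjS⟩

theorem diagram_topCols {ν : YoungDiagram} (hν : ν ∈ B.box) : B.diagram (B.topCols ν) = ν := by
  refine ext_colLen fun j => ?_
  have := hν j
  have := B.hi_le_lo_add_one j
  simp only [colLen_diagram, select, topCols, mem_filter]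
  split_ifs with h
  · exact h.2.symm
  · by_cases hj : j ∈ B.slack
    · have : ν.colLen j ≠ B.hi j := fun e => h ⟨hj, e⟩
      omega
    · have := B.lo_eq_hi_of_notMem_slack hj
      omega

theorem sum_lo_le_card_cells {ν : YoungDiagram} (hν : ν ∈ B.box) :
    ∑ j ∈ range B.len, B.lo j ≤ #ν.cells := by
  rw [← B.diagram_topCols hν, B.card_cells_diagram (B.topCols_subset ν)]
  exact Nat.le_add_right _ _

theorem ncard_box_card_add_eq (p q : ℕ) :
    {ν | ν ∈ B.box ∧ #ν.cells + p = ∑ j ∈ range B.len, B.lo j + q}.ncard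
      = if p ≤ q then (#B.slack).choose (q - p) else 0 := by
  split_ifs with hpq
  · have himage : {ν | ν ∈ B.box ∧ #ν.cells + p = ∑ j ∈ range B.len, B.lo j + q}
        = B.diagram '' ↑(B.slack.powersetCard (q - p)) := by
      ext ν
      simp only [Set.mem_ofPred_eq, Set.mem_image, mem_coe, mem_powersetCard]
      constructor
      · rintro ⟨hν, hcard⟩
        refine ⟨B.topCols ν, ⟨B.topCols_subset ν, ?_⟩, B.diagram_topCols hν⟩
        rw [← B.diagram_topCols hν, B.card_cells_diagram (B.topCols_subset ν)] at hcard
        omega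
      · rintro ⟨S, ⟨hS, hcard⟩, rfl⟩
        refine ⟨B.diagram_mem_box S, ?_⟩
        rw [B.card_cells_diagram hS]
        omega
    rw [himage, Set.InjOn.ncard_image, Set.ncard_coe_finset, card_powersetCard]
    intro S hS T hT hST
    rw [← B.topCols_diagram (mem_powersetCard.1 hS).1, hST,
      B.topCols_diagram (mem_powersetCard.1 hT).1]
  · convert Set.ncard_empty YoungDiagram
    refine Set.eq_empty_of_forall_notMem fun ν ⟨hν, hcard⟩ => ?_
    have := B.sum_lo_le_card_cells hν
    omega

theorem ncard_box_card_add_eq_sum_hi_add (p q : ℕ) :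
    {ν | ν ∈ B.box ∧ #ν.cells + p = ∑ j ∈ range B.len, B.hi j + q}.ncard
      = if q ≤ p then (#B.slack).choose (p - q) else 0 := by
  rw [B.sum_hi, add_assoc, ncard_box_card_add_eq]
  split_ifs with h₁ h₂ h₂
  · rw [show #B.slack + q - p = #B.slack - (p - q) by omega, Nat.choose_symm (by omega)]
  · exact Nat.choose_eq_zero_of_lt (by omega)
  · exact (Nat.choose_eq_zero_of_lt (by omega)).symm
  · rfl

end ColLenBounds

def Interlaces (l k : YoungDiagram) : Prop :=
  ∀ j, k.colLen j ≤ l.colLen j + 1 ∧ l.colLen (j + 1) ≤ k.colLen j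

theorem interlaces_of_isHorizontalStrip_of_isVerticalStrip {l k ν : YoungDiagram}
    (hl : IsHorizontalStrip l ν) (hk : IsVerticalStrip k ν) : Interlaces l k := fun j => by
  have := isHorizontalStrip_iff_colLen.1 hl j
  have := isHorizontalStrip_iff_colLen.1 hl (j + 1)
  have := isVerticalStrip_iff_colLen.1 hk j
  omega

theorem interlaces_of_isVerticalStrip_of_isHorizontalStrip {l k μ : YoungDiagram}
    (hl : IsVerticalStrip μ l) (hk : IsHorizontalStrip μ k) : Interlaces l k := fun j => by
  have := isVerticalStrip_iff_colLen.1 hl j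
  have := isHorizontalStrip_iff_colLen.1 hk j
  omega

/-- Every `ν` must gain a cell in these columns, and every `μ` lose one. -/
def forcedCols (l k : YoungDiagram) : Finset ℕ :=
  (range (k.rowLen 0 + 1)).filter fun j => l.colLen j < k.colLen j

namespace Interlaces

variable {l k : YoungDiagram}

theorem colLen_eq_zero (h : Interlaces l k) : l.colLen (k.rowLen 0 + 1) = 0 := by
  simpa [colLen_eq_zero_of_rowLen_le le_rfl] using (h (k.rowLen 0)).2

def upBounds (h : Interlaces l k) : ColLenBounds where
  lo j := max (l.colLen j) (k.colLen j)
  hi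
    | 0 => l.colLen 0 + 1
    | j + 1 => min (l.colLen (j + 1) + 1) (k.colLen j)
  len := k.rowLen 0 + 1
  lo_le_hi
    | 0 => by simp [(h 0).1]
    | j + 1 => by
      have := k.colLen_anti j (j + 1) j.le_succ
      have := h j
      have := h (j + 1)
      simp only [max_le_iff, le_min_iff]
      omega
  hi_le_lo_add_one j := by cases j <;> simp
  hi_succ_le_lo j := by simp
  hi_len := by simp [colLen_eq_zero_of_rowLen_le le_rfl]

def downBounds (h : Interlaces l k) : ColLenBounds where
  lo j := max (l.colLen (j + 1)) (k.colLen j - 1)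
  hi j := min (l.colLen j) (k.colLen j)
  len := k.rowLen 0 + 1
  lo_le_hi j := by
    have := l.colLen_anti j (j + 1) j.le_succ
    have := h j
    simp only [max_le_iff, le_min_iff]
    omega
  hi_le_lo_add_one j := by
    simp only [min_le_iff]
    omega
  hi_succ_le_lo j := by simp
  hi_len := by simp [colLen_eq_zero_of_rowLen_le (k.rowLen 0).le_succ]

theorem mem_upBounds_box (h : Interlaces l k) {ν : YoungDiagram} :
    ν ∈ h.upBounds.box ↔ IsHorizontalStrip l ν ∧ IsVerticalStrip k ν := by
  simp only [ColLenBounds.box, Set.mem_ofPred_eq, isVerticalStrip_iff_colLen,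
    isHorizontalStrip_iff_colLen, ← forall_and]
  have hi_le : ∀ j, h.upBounds.hi j ≤ l.colLen j + 1 := by rintro (_ | j) <;> simp [upBounds]
  refine ⟨fun hν j => ?_, fun hν => ?_⟩
  · have hj : max (l.colLen j) (k.colLen j) ≤ ν.colLen j ∧ ν.colLen j ≤ h.upBounds.hi j := hν j
    have hj' : ν.colLen (j + 1) ≤ min (l.colLen (j + 1) + 1) (k.colLen j) := (hν (j + 1)).2
    have := hi_le j
    simp only [max_le_iff, le_min_iff] at hj hj'
    omega
  · rintro (_ | j)
    · have := hν 0
      simp only [upBounds, max_le_iff]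
      omega
    · have := hν j
      have := hν (j + 1)
      simp only [upBounds, max_le_iff, le_min_iff]
      omega

theorem mem_downBounds_box (h : Interlaces l k) {μ : YoungDiagram} :
    μ ∈ h.downBounds.box ↔ IsVerticalStrip μ l ∧ IsHorizontalStrip μ k := by
  simp only [ColLenBounds.box, downBounds, Set.mem_ofPred_eq, isVerticalStrip_iff_colLen,
    isHorizontalStrip_iff_colLen, max_le_iff, le_min_iff, ← forall_and]
  refine forall_congr' fun j => ?_
  omega

theorem sum_lo_upBounds (h : Interlaces l k) :
    ∑ j ∈ range h.upBounds.len, h.upBounds.lo j = #l.cells + #(forcedCols l k) := by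
  rw [card_cells_eq_sum_colLen l h.colLen_eq_zero, forcedCols, card_filter, ← sum_add_distrib]
  refine sum_congr rfl fun j _ => ?_
  have := (h j).1
  simp only [upBounds]
  split_ifs <;> omega

theorem sum_hi_downBounds_add (h : Interlaces l k) :
    ∑ j ∈ range h.downBounds.len, h.downBounds.hi j + #(forcedCols l k) = #k.cells := by
  change ∑ j ∈ range (k.rowLen 0 + 1), min (l.colLen j) (k.colLen j) + _ = _
  rw [card_cells_eq_sum_colLen k (colLen_eq_zero_of_rowLen_le (k.rowLen 0).le_succ), forcedCols,
    card_filter, ← sum_add_distrib]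
  refine sum_congr rfl fun j _ => ?_
  have := (h j).1
  split_ifs <;> omega

theorem sum_hi_upBounds_add_sum_lo_downBounds (h : Interlaces l k) :
    ∑ j ∈ range h.upBounds.len, h.upBounds.hi j + ∑ j ∈ range h.downBounds.len, h.downBounds.lo j
      = #l.cells + #k.cells + 1 := by
  have hkM : k.colLen (k.rowLen 0) = 0 := colLen_eq_zero_of_rowLen_le le_rfl
  -- `min (x + 1) y + max x (y - 1) = x + y` for `x ≤ y`
  have hpair : ∀ j, h.upBounds.hi (j + 1) + h.downBounds.lo j = l.colLen (j + 1) + k.colLen j :=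
    fun j => by
      have := (h j).2
      simp only [upBounds, downBounds]
      omega
  have hsum := sum_congr rfl fun j (_ : j ∈ range (k.rowLen 0)) => hpair j
  have hloM : h.downBounds.lo (k.rowLen 0) = 0 := by simp [downBounds, hkM, h.colLen_eq_zero]
  rw [sum_add_distrib, sum_add_distrib] at hsum
  rw [card_cells_eq_sum_colLen l h.colLen_eq_zero, card_cells_eq_sum_colLen k hkM,
    sum_range_succ' l.colLen]
  change ∑ j ∈ range (k.rowLen 0 + 1), h.upBounds.hi j
    + ∑ j ∈ range (k.rowLen 0 + 1), h.downBounds.lo j = _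
  rw [sum_range_succ', sum_range_succ _ (k.rowLen 0), hloM]
  change _ + (l.colLen 0 + 1) + _ = _
  omega

theorem card_slack_upBounds (h : Interlaces l k) :
    #h.upBounds.slack = #h.downBounds.slack + 1 := by
  have := h.upBounds.sum_hi
  have := h.downBounds.sum_hi
  have := h.sum_lo_upBounds
  have := h.sum_hi_downBounds_add
  have := h.sum_hi_upBounds_add_sum_lo_downBounds
  omega

variable {a b : ℕ}

theorem ncard_up (h : Interlaces l k) (hsize : #l.cells + a = #k.cells + b) :
    {ν : YoungDiagram | IsHorizontalStrip l ν ∧ #ν.cells = #l.cells + a ∧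
        IsVerticalStrip k ν ∧ #ν.cells = #k.cells + b}.ncard
      = if #(forcedCols l k) ≤ a then (#h.upBounds.slack).choose (a - #(forcedCols l k))
        else 0 := by
  rw [← h.upBounds.ncard_box_card_add_eq, h.sum_lo_upBounds]
  refine congrArg Set.ncard (Set.ext fun ν => ?_)
  simp only [Set.mem_ofPred_eq, h.mem_upBounds_box]
  constructor
  · rintro ⟨hl, hν, hk, -⟩
    exact ⟨⟨hl, hk⟩, by omega⟩
  · rintro ⟨⟨hl, hk⟩, hν⟩
    exact ⟨hl, by omega, hk, by omega⟩

theorem ncard_down (h : Interlaces l k) (hsize : #l.cells + a = #k.cells + b) :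
    {μ : YoungDiagram | IsVerticalStrip μ l ∧ #l.cells = #μ.cells + b ∧
        IsHorizontalStrip μ k ∧ #k.cells = #μ.cells + a}.ncard
      = if #(forcedCols l k) ≤ a then (#h.downBounds.slack).choose (a - #(forcedCols l k))
        else 0 := by
  rw [← h.downBounds.ncard_box_card_add_eq_sum_hi_add]
  have := h.sum_hi_downBounds_add
  refine congrArg Set.ncard (Set.ext fun μ => ?_)
  simp only [Set.mem_ofPred_eq, h.mem_downBounds_box]
  constructor
  · rintro ⟨hl, hμ, hk, hμ'⟩
    exact ⟨⟨hl, hk⟩, by omega⟩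
  · rintro ⟨⟨hl, hk⟩, hμ⟩
    exact ⟨hl, by omega, hk, by omega⟩

theorem ncard_down_sub_one (h : Interlaces l k) (hsize : #l.cells + a = #k.cells + b) :
    {μ : YoungDiagram | 1 ≤ a ∧ 1 ≤ b ∧ IsVerticalStrip μ l ∧ #l.cells = #μ.cells + (b - 1) ∧
        IsHorizontalStrip μ k ∧ #k.cells = #μ.cells + (a - 1)}.ncard
      = if #(forcedCols l k) + 1 ≤ a then
          (#h.downBounds.slack).choose (a - (#(forcedCols l k) + 1))
        else 0 := by
  rw [← h.downBounds.ncard_box_card_add_eq_sum_hi_add]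
  have := h.sum_hi_downBounds_add
  refine congrArg Set.ncard (Set.ext fun μ => ?_)
  simp only [Set.mem_ofPred_eq, h.mem_downBounds_box]
  constructor
  · rintro ⟨ha, hb, hl, hμ, hk, hμ'⟩
    exact ⟨⟨hl, hk⟩, by omega⟩
  · rintro ⟨⟨hl, hk⟩, hμ⟩
    have := card_le_card (cells_subset_iff.2 hl.1)
    have := card_le_card (cells_subset_iff.2 hk.1)
    exact ⟨by omega, by omega, hl, by omega, hk, by omega⟩

end Interlaces

theorem Nat.ite_choose_succ (n f a : ℕ) :
    (if f ≤ a then (n + 1).choose (a - f) else 0)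
      = (if f ≤ a then n.choose (a - f) else 0)
        + if f + 1 ≤ a then n.choose (a - (f + 1)) else 0 := by
  split_ifs with h₁ h₂ <;> try omega
  · rw [show a - f = a - (f + 1) + 1 by omega, Nat.choose_succ_succ', add_comm]
  · simp [show a = f by omega]

/-- The commutation relation `D*_y ∘ U_x = (1+xy) · (U_x ∘ D*_y)` for the up and dual
down operators on Young's lattice, stated coefficientwise: for all partitions `λ`, `κ`
and all exponents `a`, `b`, the coefficient of `κ·x^a·y^b` on the two sides agree.
The coefficient on the left counts partitions `ν` with `ν/λ` a horizontal strip of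
size `a` and `ν/κ` a vertical strip of size `b`; on the right one counts `μ` with
`λ/μ` a vertical strip of size `b` and `κ/μ` a horizontal strip of size `a`, plus
(accounting for the factor `xy`) the analogous count with sizes `b-1` and `a-1`. -/
theorem dual_commutation_relation_schur (l k : YoungDiagram) (a b : ℕ) :
    {ν : YoungDiagram | IsHorizontalStrip l ν ∧ ν.cells.card = l.cells.card + a ∧
        IsVerticalStrip k ν ∧ ν.cells.card = k.cells.card + b}.ncard
      = {μ : YoungDiagram | IsVerticalStrip μ l ∧ l.cells.card = μ.cells.card + b ∧
            IsHorizontalStrip μ k ∧ k.cells.card = μ.cells.card + a}.ncard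
        + {μ : YoungDiagram | 1 ≤ a ∧ 1 ≤ b ∧
            IsVerticalStrip μ l ∧ l.cells.card = μ.cells.card + (b - 1) ∧
            IsHorizontalStrip μ k ∧ k.cells.card = μ.cells.card + (a - 1)}.ncard := by
  by_cases h : Interlaces l k ∧ #l.cells + a = #k.cells + b
  · obtain ⟨hI, hsize⟩ := h
    rw [hI.ncard_up hsize, hI.ncard_down hsize, hI.ncard_down_sub_one hsize,
      hI.card_slack_upBounds]
    exact Nat.ite_choose_succ _ _ _
  · have ncard_eq_zero : ∀ {s : Set YoungDiagram},
        (∀ x ∈ s, Interlaces l k ∧ #l.cells + a = #k.cells + b) → s.ncard = 0 := fun hs => by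
      rw [Set.eq_empty_of_forall_notMem fun x hx => h (hs x hx), Set.ncard_empty]
    rw [ncard_eq_zero, ncard_eq_zero, ncard_eq_zero]
    · rintro μ ⟨ha, hb, hl, hμl, hk, hμk⟩
      exact ⟨interlaces_of_isVerticalStrip_of_isHorizontalStrip hl hk, by omega⟩
    · rintro μ ⟨hl, hμl, hk, hμk⟩
      exact ⟨interlaces_of_isVerticalStrip_of_isHorizontalStrip hl hk, by omega⟩
    · rintro ν ⟨hl, hνl, hk, hνk⟩
      exact ⟨interlaces_of_isHorizontalStrip_of_isVerticalStrip hl hk, by omega⟩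
end

section
/- Let d ≥ 0 and let R ⊆ {1,...,d}, S ⊆ {0,1,...,d} with |S| = |R| or |S| = |R| + 1. Split the word D_0 U_1 D_1 U_2 D_2 ... U_d D_d into two subsequences: the first consists of all U_r with r ∈ R and all D_s with s ∈ S; the second of all U_i with i ∉ R and all D_j with j ∉ S. Interpret each subsequence as a lattice path (U = up step (1,1), D = down step (1,-1)) ending on the x-axis. Then in each path, every up step strictly above the x-axis can be paired with the nearest down step to its right at the same height, every up step weakly below the x-axis with the nearest down step to its left at the same height, and after all pairings exactly one down step (ending on the x-axis) remains unpaired in total across both paths. -/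
/-- The value `±1` of an up/down step. -/
def stepVal (b : Bool) : ℤ := if b then 1 else -1

/-- The height of the lattice path `l` just before step `i`, normalized so that the
path ends on the `x`-axis (at height `0`). -/
def heightAt (l : List Bool) (i : ℕ) : ℤ := -(((l.drop i).map stepVal).sum)

/-- Step `i` of `l` is an up step. -/
def isUpAt (l : List Bool) (i : ℕ) : Prop := i < l.length ∧ l.getD i false = true

/-- Step `i` of `l` is a down step. -/
def isDownAt (l : List Bool) (i : ℕ) : Prop := i < l.length ∧ l.getD i true = false

/-- `f` pairs each up step of the path `l` with a down step at the same height: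
an up step strictly above the `x`-axis (starting height `≥ 0`) with the nearest
such down step to its right, an up step weakly below the `x`-axis (starting
height `< 0`) with the nearest such down step to its left; and distinct up steps
are paired with distinct down steps. -/
def IsPairing (l : List Bool) (f : ℕ → ℕ) : Prop :=
  (∀ i, isUpAt l i →
      isDownAt l (f i) ∧ heightAt l (f i + 1) = heightAt l i ∧
        (if 0 ≤ heightAt l i then
          i < f i ∧ ∀ j, i < j → j < f i → isDownAt l j → heightAt l (j + 1) ≠ heightAt l i
        else
          f i < i ∧ ∀ j, f i < j → j < i → isDownAt l j → heightAt l (j + 1) ≠ heightAt l i)) ∧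
  ∀ i i', isUpAt l i → isUpAt l i' → f i = f i' → i = i'

/-- The set of down steps of `l` left unpaired by `f`. -/
def unpairedDowns (l : List Bool) (f : ℕ → ℕ) : Finset ℕ :=
  (Finset.range l.length).filter fun j =>
    l.getD j true = false ∧ ∀ i ∈ Finset.range l.length, l.getD i false = true → f i ≠ j

/-- The word `D_0 U_1 D_1 U_2 D_2 ⋯ U_d D_d`; `true` stands for a `U` letter and
`false` for a `D` letter, the second component being the index. -/
def qtWord (d : ℕ) : List (Bool × ℕ) :=
  (false, 0) :: ((List.range d).map fun i => [(true, i + 1), (false, i + 1)]).flatten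

/-- The first subsequence: the letters `U_r` with `r ∈ R` and `D_s` with `s ∈ S`. -/
def pathOne (d : ℕ) (R S : Finset ℕ) : List Bool :=
  ((qtWord d).filter fun p => if p.1 then decide (p.2 ∈ R) else decide (p.2 ∈ S)).map Prod.fst

/-- The second subsequence: the letters `U_i` with `i ∉ R` and `D_j` with `j ∉ S`. -/
def pathTwo (d : ℕ) (R S : Finset ℕ) : List Bool :=
  ((qtWord d).filter fun p => if p.1 then decide (p.2 ∉ R) else decide (p.2 ∉ S)).map Prod.fst


section PathPairingAux

lemma heightAt_of_le (l : List Bool) {i : ℕ} (h : l.length ≤ i) : heightAt l i = 0 := by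
  simp [heightAt, List.drop_eq_nil_of_le h]

lemma heightAt_succ (l : List Bool) {i : ℕ} (h : i < l.length) :
    heightAt l (i + 1) = heightAt l i + stepVal (l.getD i true) := by
  have h2 := List.drop_eq_getElem_cons (l := l) h
  rw [heightAt, heightAt, h2, List.getD_eq_getElem l true h]
  simp only [List.map_cons, List.sum_cons]
  ring

lemma isDownAt_of_lt (l : List Bool) {j : ℕ} (hlt : heightAt l (j + 1) < heightAt l j) :
    isDownAt l j ∧ heightAt l (j + 1) = heightAt l j - 1 := by
  have hj : j < l.length := by
    by_contra hc
    push_neg at hc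
    rw [heightAt_of_le l hc, heightAt_of_le l (le_trans hc (Nat.le_succ j))] at hlt
    exact lt_irrefl _ hlt
  have hs := heightAt_succ l hj
  cases hb : l.getD j true with
  | true => rw [hb] at hs; simp [stepVal] at hs; omega
  | false => rw [hb] at hs; simp [stepVal] at hs; exact ⟨⟨hj, hb⟩, by omega⟩

lemma isUpAt_of_lt (l : List Bool) {i : ℕ} (hlt : heightAt l i < heightAt l (i + 1)) :
    isUpAt l i ∧ heightAt l (i + 1) = heightAt l i + 1 := by
  have hj : i < l.length := by
    by_contra hc
    push_neg at hc
    rw [heightAt_of_le l hc, heightAt_of_le l (le_trans hc (Nat.le_succ i))] at hlt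
    exact lt_irrefl _ hlt
  have hs := heightAt_succ l hj
  cases hb : l.getD i true with
  | false => rw [hb] at hs; simp [stepVal] at hs; omega
  | true =>
    rw [hb] at hs; simp [stepVal] at hs
    have hb' : l.getD i false = true := by
      rw [List.getD_eq_getElem l false hj]
      rw [List.getD_eq_getElem l true hj] at hb
      exact hb
    exact ⟨⟨hj, hb'⟩, by omega⟩

lemma first_cross_down (l : List Bool) {a b : ℕ} {c : ℤ} (hab : a ≤ b)
    (ha : c < heightAt l a) (hb : heightAt l b ≤ c) :
    ∃ j, a ≤ j ∧ j < b ∧ isDownAt l j ∧ heightAt l j = c + 1 ∧ heightAt l (j + 1) = c ∧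
      ∀ m, a ≤ m → m ≤ j → c < heightAt l m := by
  have hex : ∃ k, heightAt l (a + k) ≤ c := ⟨b - a, by rwa [Nat.add_sub_cancel' hab]⟩
  classical
  set k := Nat.find hex with hk
  have hPk : heightAt l (a + k) ≤ c := Nat.find_spec hex
  have hk0 : k ≠ 0 := by
    intro h0
    rw [h0, Nat.add_zero] at hPk
    omega
  have hmin : ∀ m, a ≤ m → m < a + k → c < heightAt l m := by
    intro m ham hmk
    have := Nat.find_min hex (m := m - a) (by omega)
    rw [Nat.add_sub_cancel' ham] at this
    omega
  set j := a + k - 1 with hj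
  have haj : a ≤ j := by omega
  have hjk : j + 1 = a + k := by omega
  have hhj : c < heightAt l j := hmin j haj (by omega)
  have hhj1 : heightAt l (j + 1) ≤ c := by rw [hjk]; exact hPk
  obtain ⟨hdown, hstep⟩ := isDownAt_of_lt l (j := j) (by omega)
  have hjb : j < b := by
    by_contra hc2
    push_neg at hc2
    exact absurd (hmin b hab (by omega)) (by omega)
  exact ⟨j, haj, hjb, hdown, by omega, by omega, fun m h1 h2 => hmin m h1 (by omega)⟩

lemma first_cross_up (l : List Bool) {a b : ℕ} {c : ℤ} (hab : a ≤ b)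
    (ha : heightAt l a ≤ c) (hb : c < heightAt l b) :
    ∃ i, a ≤ i ∧ i < b ∧ isUpAt l i ∧ heightAt l i = c ∧ heightAt l (i + 1) = c + 1 ∧
      ∀ m, a ≤ m → m ≤ i → heightAt l m ≤ c := by
  have hex : ∃ k, c < heightAt l (a + k) := ⟨b - a, by rwa [Nat.add_sub_cancel' hab]⟩
  classical
  set k := Nat.find hex with hk
  have hPk : c < heightAt l (a + k) := Nat.find_spec hex
  have hk0 : k ≠ 0 := by
    intro h0
    rw [h0, Nat.add_zero] at hPk
    omega
  have hmin : ∀ m, a ≤ m → m < a + k → heightAt l m ≤ c := by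
    intro m ham hmk
    have := Nat.find_min hex (m := m - a) (by omega)
    rw [Nat.add_sub_cancel' ham] at this
    omega
  set i := a + k - 1 with hi
  have hai : a ≤ i := by omega
  have hik : i + 1 = a + k := by omega
  have hhi : heightAt l i ≤ c := hmin i hai (by omega)
  have hhi1 : c < heightAt l (i + 1) := by rw [hik]; exact hPk
  obtain ⟨hup, hstep⟩ := isUpAt_of_lt l (i := i) (by omega)
  have hib : i < b := by
    by_contra hc2
    push_neg at hc2
    exact absurd (hmin b hab (by omega)) (by omega)
  exact ⟨i, hai, hib, hup, by omega, by omega, fun m h1 h2 => hmin m h1 (by omega)⟩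

lemma last_cross_up (l : List Bool) {a b : ℕ} {c : ℤ} (hab : a ≤ b)
    (ha : heightAt l a ≤ c) (hb : c < heightAt l b) :
    ∃ i, a ≤ i ∧ i < b ∧ isUpAt l i ∧ heightAt l i = c ∧ heightAt l (i + 1) = c + 1 ∧
      ∀ m, i < m → m ≤ b → c < heightAt l m := by
  classical
  set i := Nat.findGreatest (fun m => heightAt l m ≤ c) b with hi
  have hPi : heightAt l i ≤ c := Nat.findGreatest_spec (P := fun m => heightAt l m ≤ c) hab ha
  have hile : i ≤ b := Nat.findGreatest_le b
  have hai : a ≤ i := Nat.le_findGreatest hab ha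
  have hmax : ∀ m, i < m → m ≤ b → c < heightAt l m := by
    intro m h1 h2
    by_contra hc2
    push_neg at hc2
    exact absurd (Nat.le_findGreatest (P := fun m => heightAt l m ≤ c) h2 hc2) (by omega)
  have hib : i < b := by
    rcases Nat.lt_or_ge i b with h | h
    · exact h
    · exfalso
      have hib2 : i = b := by omega
      rw [hib2] at hPi
      omega
  have hhi1 : c < heightAt l (i + 1) := hmax (i + 1) (by omega) (by omega)
  obtain ⟨hup, hstep⟩ := isUpAt_of_lt l (i := i) (by omega)
  exact ⟨i, hai, hib, hup, by omega, by omega, hmax⟩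

lemma up_step (l : List Bool) {i : ℕ} (h : isUpAt l i) :
    heightAt l (i + 1) = heightAt l i + 1 := by
  have hs := heightAt_succ l h.1
  have h2 : l.getD i true = true := by
    have h3 := h.2
    rw [List.getD_eq_getElem l false h.1] at h3
    rw [List.getD_eq_getElem l true h.1]
    exact h3
  rw [h2] at hs
  simpa [stepVal] using hs

lemma down_step (l : List Bool) {j : ℕ} (h : isDownAt l j) :
    heightAt l (j + 1) = heightAt l j - 1 := by
  have hs := heightAt_succ l h.1
  rw [h.2] at hs
  simp [stepVal] at hs
  omega

open Classical in
noncomputable def pairFun (l : List Bool) (i : ℕ) : ℕ :=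
  if 0 ≤ heightAt l i then
    if hex : ∃ j, i < j ∧ isDownAt l j ∧ heightAt l (j + 1) = heightAt l i then Nat.find hex
    else 0
  else Nat.findGreatest (fun j => isDownAt l j ∧ heightAt l (j + 1) = heightAt l i) i

lemma right_exists (l : List Bool) {i : ℕ} (hup : isUpAt l i) (hpos : 0 ≤ heightAt l i) :
    ∃ j, i < j ∧ isDownAt l j ∧ heightAt l (j + 1) = heightAt l i := by
  obtain ⟨j, h1, _, hdn, _, h5, _⟩ := first_cross_down l (a := i + 1) (b := l.length)
    (c := heightAt l i) hup.1 (by rw [up_step l hup]; omega)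
    (by rw [heightAt_of_le l (le_refl _)]; omega)
  exact ⟨j, by omega, hdn, h5⟩

lemma left_exists (l : List Bool) {i : ℕ} (h0 : 0 ≤ heightAt l 0) (_hup : isUpAt l i)
    (hneg : heightAt l i < 0) :
    ∃ j, j < i ∧ isDownAt l j ∧ heightAt l (j + 1) = heightAt l i := by
  obtain ⟨j, _, h2, hdn, _, h5, _⟩ := first_cross_down l (a := 0) (b := i)
    (c := heightAt l i) (Nat.zero_le i) (by omega) (le_refl _)
  exact ⟨j, h2, hdn, h5⟩

lemma pairFun_spec (l : List Bool) (h0 : 0 ≤ heightAt l 0) {i : ℕ} (hup : isUpAt l i) :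
    isDownAt l (pairFun l i) ∧ heightAt l (pairFun l i + 1) = heightAt l i ∧
      (if 0 ≤ heightAt l i then
        i < pairFun l i ∧ ∀ j, i < j → j < pairFun l i → isDownAt l j →
          heightAt l (j + 1) ≠ heightAt l i
      else
        pairFun l i < i ∧ ∀ j, pairFun l i < j → j < i → isDownAt l j →
          heightAt l (j + 1) ≠ heightAt l i) := by
  classical
  by_cases hpos : 0 ≤ heightAt l i
  · have hex := right_exists l hup hpos
    have hf : pairFun l i = Nat.find hex := by
      rw [pairFun, if_pos hpos, dif_pos hex]
    have hspec := Nat.find_spec hex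
    rw [← hf] at hspec
    refine ⟨hspec.2.1, hspec.2.2, ?_⟩
    rw [if_pos hpos]
    refine ⟨hspec.1, fun j hij hjf hdn hh => ?_⟩
    rw [hf] at hjf
    exact Nat.find_min hex hjf ⟨hij, hdn, hh⟩
  · push_neg at hpos
    set P : ℕ → Prop := fun j => isDownAt l j ∧ heightAt l (j + 1) = heightAt l i with hP
    have hf : pairFun l i = Nat.findGreatest P i := by
      rw [pairFun, if_neg (by omega)]
    obtain ⟨j0, hj0i, hdn0, hh0⟩ := left_exists l h0 hup hpos
    have hPspec : P (pairFun l i) := by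
      rw [hf]
      exact Nat.findGreatest_spec (P := P) (le_of_lt hj0i) ⟨hdn0, hh0⟩
    have hle : pairFun l i ≤ i := by rw [hf]; exact Nat.findGreatest_le i
    have hne : pairFun l i ≠ i := by
      intro he
      have hth := hPspec.1.2
      rw [he] at hth
      rw [List.getD_eq_getElem l true hup.1] at hth
      have h4 := hup.2
      rw [List.getD_eq_getElem l false hup.1] at h4
      rw [hth] at h4
      exact Bool.noConfusion h4
    refine ⟨hPspec.1, hPspec.2, ?_⟩
    rw [if_neg (by omega)]
    refine ⟨by omega, fun j h1 h2 hdn hh => ?_⟩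
    have := Nat.le_findGreatest (P := P) (le_of_lt h2) ⟨hdn, hh⟩
    rw [← hf] at this
    omega

lemma pairFun_inj_aux (l : List Bool) (h0 : 0 ≤ heightAt l 0) {i i' : ℕ}
    (hup : isUpAt l i) (hup' : isUpAt l i') (hff : pairFun l i = pairFun l i')
    (hlt : i < i') : False := by
  obtain ⟨hdn, hh, hbr⟩ := pairFun_spec l h0 hup
  obtain ⟨hdn', hh', hbr'⟩ := pairFun_spec l h0 hup'
  have hc : heightAt l i = heightAt l i' := by rw [← hh, ← hh', hff]
  set c := heightAt l i with hcdef
  obtain ⟨j0, hj1, hj2, hjdn, _, hjh, _⟩ := first_cross_down l (a := i + 1) (b := i')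
    (c := c) hlt (by rw [up_step l hup]; omega) (by omega)
  by_cases hpos : 0 ≤ c
  · rw [if_pos hpos] at hbr
    rw [if_pos (by omega : 0 ≤ heightAt l i')] at hbr'
    exact hbr.2 j0 (by omega) (by omega) hjdn (by rw [hjh])
  · rw [if_neg hpos] at hbr
    rw [if_neg (by omega : ¬ 0 ≤ heightAt l i')] at hbr'
    refine hbr'.2 j0 ?_ (by omega) hjdn (by rw [hjh, hc])
    omega

lemma isPairing_pairFun (l : List Bool) (h0 : 0 ≤ heightAt l 0) : IsPairing l (pairFun l) := by
  refine ⟨fun i hup => pairFun_spec l h0 hup, fun i i' hup hup' hff => ?_⟩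
  rcases Nat.lt_trichotomy i i' with h | h | h
  · exact absurd (pairFun_inj_aux l h0 hup hup' hff h) not_false
  · exact h
  · exact absurd (pairFun_inj_aux l h0 hup' hup hff.symm h) not_false

lemma list_sum_getD (φ : Bool → ℤ) (l : List Bool) :
    (l.map φ).sum = ∑ i ∈ Finset.range l.length, φ (l.getD i true) := by
  induction l with
  | nil => simp
  | cons b t ih =>
    rw [List.map_cons, List.sum_cons, List.length_cons, Finset.sum_range_succ']
    simp only [List.getD_cons_succ, List.getD_cons_zero, ih]
    ring

lemma heightAt_zero_eq (l : List Bool) :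
    heightAt l 0 =
      (((Finset.range l.length).filter fun j => l.getD j true = false).card : ℤ) -
      (((Finset.range l.length).filter fun i => l.getD i false = true).card : ℤ) := by
  classical
  have hUp : ((Finset.range l.length).filter fun i => l.getD i false = true) =
      ((Finset.range l.length).filter fun i => l.getD i true = true) := by
    apply Finset.filter_congr
    intro i hi
    rw [Finset.mem_range] at hi
    rw [List.getD_eq_getElem l false hi, List.getD_eq_getElem l true hi]
  rw [hUp, heightAt, List.drop_zero, list_sum_getD]
  rw [← Finset.sum_filter_add_sum_filter_not (Finset.range l.length)
    (fun i => l.getD i true = true) (fun i => stepVal (l.getD i true))]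
  have h1 : ∑ i ∈ (Finset.range l.length).filter (fun i => l.getD i true = true),
      stepVal (l.getD i true) =
      (((Finset.range l.length).filter fun i => l.getD i true = true).card : ℤ) := by
    have e : ∀ i ∈ (Finset.range l.length).filter (fun i => l.getD i true = true),
        stepVal (l.getD i true) = 1 := by
      intro i hi
      rw [Finset.mem_filter] at hi
      rw [hi.2]
      rfl
    rw [Finset.sum_congr rfl e]
    simp
  have h2 : ∑ i ∈ (Finset.range l.length).filter (fun i => ¬ l.getD i true = true),
      stepVal (l.getD i true) =
      -((((Finset.range l.length).filter fun i => l.getD i true = false).card : ℤ)) := by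
    have hq : ((Finset.range l.length).filter fun i => ¬ l.getD i true = true) =
        ((Finset.range l.length).filter fun i => l.getD i true = false) := by
      apply Finset.filter_congr
      intro i _
      simp
    rw [hq]
    have e : ∀ i ∈ (Finset.range l.length).filter (fun i => l.getD i true = false),
        stepVal (l.getD i true) = -1 := by
      intro i hi
      rw [Finset.mem_filter] at hi
      rw [hi.2]
      rfl
    rw [Finset.sum_congr rfl e]
    simp
  rw [h1, h2]
  ring

lemma unpairedDowns_card (l : List Bool) (f : ℕ → ℕ) (hp : IsPairing l f) :
    ((unpairedDowns l f).card : ℤ) = heightAt l 0 := by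
  classical
  set Up := (Finset.range l.length).filter fun i => l.getD i false = true with hUp
  set Dn := (Finset.range l.length).filter fun j => l.getD j true = false with hDn
  have hupmem : ∀ i ∈ Up, isUpAt l i := by
    intro i hi
    rw [hUp, Finset.mem_filter, Finset.mem_range] at hi
    exact ⟨hi.1, hi.2⟩
  have hsub : Up.image f ⊆ Dn := by
    intro j hj
    rw [Finset.mem_image] at hj
    obtain ⟨i, hi, rfl⟩ := hj
    have := (hp.1 i (hupmem i hi)).1
    rw [hDn, Finset.mem_filter, Finset.mem_range]
    exact ⟨this.1, this.2⟩
  have himg : (Up.image f).card = Up.card := by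
    apply Finset.card_image_of_injOn
    intro i hi i' hi' hff
    exact hp.2 i i' (hupmem i hi) (hupmem i' hi') hff
  have hun : unpairedDowns l f = Dn \ Up.image f := by
    ext j
    rw [unpairedDowns, Finset.mem_sdiff, Finset.mem_filter, hDn, Finset.mem_filter,
      Finset.mem_image]
    constructor
    · rintro ⟨h1, h2, h3⟩
      refine ⟨⟨h1, h2⟩, ?_⟩
      rintro ⟨i, hi, rfl⟩
      rw [hUp, Finset.mem_filter] at hi
      exact h3 i hi.1 hi.2 rfl
    · rintro ⟨⟨h1, h2⟩, h3⟩
      refine ⟨h1, h2, fun i hi hi2 hfi => h3 ⟨i, ?_, hfi⟩⟩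
      rw [hUp, Finset.mem_filter]
      exact ⟨hi, hi2⟩
  rw [hun, Finset.card_sdiff_of_subset hsub, himg, heightAt_zero_eq l, ← hUp, ← hDn]
  have : Up.card ≤ Dn.card := himg ▸ Finset.card_le_card hsub
  push_cast [Nat.cast_sub this]
  ring

lemma unpaired_ends_zero (l : List Bool) (h0 : 0 ≤ heightAt l 0) (h1 : heightAt l 0 ≤ 1) :
    ∀ j ∈ unpairedDowns l (pairFun l), heightAt l (j + 1) = 0 := by
  classical
  intro j hj
  rw [unpairedDowns, Finset.mem_filter, Finset.mem_range] at hj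
  obtain ⟨hjn, hjdown, hjun⟩ := hj
  set c := heightAt l (j + 1) with hc
  by_contra hne
  have hdn : isDownAt l j := ⟨hjn, hjdown⟩
  have hjstep : heightAt l j = c + 1 := by have := down_step l hdn; omega
  rcases lt_or_gt_of_ne hne with hneg | hpos
  · obtain ⟨i, hi1, hi2, hup, hih, _, hbelow⟩ := first_cross_up l (a := j + 1) (b := l.length)
      (c := c) hjn (le_refl _) (by rw [heightAt_of_le l (le_refl _)]; omega)
    have hf : pairFun l i = j := by
      rw [pairFun, if_neg (by rw [hih]; omega)]
      rw [Nat.findGreatest_eq_iff]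
      refine ⟨by omega, fun _ => ⟨hdn, by rw [hih]⟩, ?_⟩
      intro k hk1 hk2 hPk
      have hkc : heightAt l k = c + 1 := by
        have := down_step l hPk.1
        rw [hih] at hPk
        omega
      have := hbelow k (by omega) (by omega)
      omega
    exact hjun i (by rw [Finset.mem_range]; exact hup.1) hup.2 hf
  · obtain ⟨i, _, hi2, hup, hih, _, habove⟩ := last_cross_up l (a := 0) (b := j)
      (c := c) (Nat.zero_le j) (by omega) (by omega)
    have hex : ∃ k, i < k ∧ isDownAt l k ∧ heightAt l (k + 1) = heightAt l i :=
      ⟨j, hi2, hdn, by rw [hih]⟩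
    have hf : pairFun l i = j := by
      rw [pairFun, if_pos (by rw [hih]; omega), dif_pos hex]
      have hle : Nat.find hex ≤ j := Nat.find_le ⟨hi2, hdn, by rw [hih]⟩
      rcases Nat.lt_or_ge (Nat.find hex) j with hlt | hge
      · exfalso
        obtain ⟨hk1, hk2, hk3⟩ := Nat.find_spec hex
        have := habove (Nat.find hex + 1) (by omega) (by omega)
        omega
      · omega
    exact hjun i (by rw [Finset.mem_range]; exact hup.1) hup.2 hf

lemma qtWord_succ (d : ℕ) : qtWord (d + 1) = qtWord d ++ [(true, d + 1), (false, d + 1)] := by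
  simp [qtWord, List.range_succ]

lemma card_filter_insert {a : ℕ} {s : Finset ℕ} (ha : a ∉ s) (R : Finset ℕ) :
    (((insert a s).filter (· ∈ R)).card : ℤ) =
      ((s.filter (· ∈ R)).card : ℤ) + (if a ∈ R then 1 else 0) := by
  classical
  rw [Finset.filter_insert]
  split
  · rw [Finset.card_insert_of_notMem (fun hmem => ha (Finset.mem_of_mem_filter a hmem))]
    push_cast
    ring
  · simp

lemma pathOne_sum (d : ℕ) (R S : Finset ℕ) :
    ((pathOne d R S).map stepVal).sum =
      (((Finset.Icc 1 d).filter (· ∈ R)).card : ℤ) -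
      (((Finset.range (d + 1)).filter (· ∈ S)).card : ℤ) := by
  classical
  induction d with
  | zero =>
    by_cases h : 0 ∈ S <;>
      simp [pathOne, qtWord, List.filter, h, stepVal, Finset.filter_singleton,
        Finset.range_one]
  | succ n ih =>
    have h1 : pathOne (n + 1) R S = pathOne n R S ++
        (([(true, n + 1), (false, n + 1)] : List (Bool × ℕ)).filter
          fun p => if p.1 then decide (p.2 ∈ R) else decide (p.2 ∈ S)).map Prod.fst := by
      rw [pathOne, qtWord_succ, List.filter_append, List.map_append]
      rfl
    rw [h1, List.map_append, List.sum_append, ih]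
    have hIcc : Finset.Icc 1 (n + 1) = insert (n + 1) (Finset.Icc 1 n) := by
      rw [← Finset.insert_Icc_right_eq_Icc_add_one (by omega)]
    have hrange : Finset.range (n + 1 + 1) = insert (n + 1) (Finset.range (n + 1)) := by
      rw [Finset.range_add_one]
    rw [hIcc, hrange, card_filter_insert (by simp) R, card_filter_insert (by simp) S]
    by_cases hr : n + 1 ∈ R <;> by_cases hs : n + 1 ∈ S <;>
      simp [List.filter, hr, hs, stepVal] <;> ring

lemma filter_not_sum (l : List (Bool × ℕ)) (p : Bool × ℕ → Bool) :
    (((l.filter p).map Prod.fst).map stepVal).sum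
      + (((l.filter fun x => !p x).map Prod.fst).map stepVal).sum
      = ((l.map Prod.fst).map stepVal).sum := by
  induction l with
  | nil => simp
  | cons a t ih =>
    cases hp : p a <;> simp [List.filter_cons, hp, List.map_map] at ih ⊢ <;> rw [← ih] <;> ring

lemma qtWord_total (d : ℕ) : (((qtWord d).map Prod.fst).map stepVal).sum = -1 := by
  induction d with
  | zero => simp [qtWord, stepVal]
  | succ n ih =>
    simp only [qtWord_succ, List.map_append, List.sum_append]
    rw [ih]
    simp [stepVal]

lemma pathTwo_eq (d : ℕ) (R S : Finset ℕ) :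
    pathTwo d R S = ((qtWord d).filter fun x =>
      !(if x.1 then decide (x.2 ∈ R) else decide (x.2 ∈ S))).map Prod.fst := by
  rw [pathTwo]
  congr 1
  apply List.filter_congr
  intro x _
  rcases x with ⟨b, m⟩
  cases b <;> simp

lemma pathSums (d : ℕ) (R S : Finset ℕ) :
    ((pathOne d R S).map stepVal).sum + ((pathTwo d R S).map stepVal).sum = -1 := by
  rw [pathTwo_eq, pathOne, ← qtWord_total d]
  exact filter_not_sum (qtWord d) _

end PathPairingAux

/-- The path-pairing statement: for `R ⊆ {1,…,d}` and `S ⊆ {0,…,d}` with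
`|S| ∈ {|R|, |R|+1}`, in each of the two lattice paths obtained from the word
`D_0 U_1 D_1 ⋯ U_d D_d` the up steps can be paired with down steps at the same
height (nearest to the right for up steps strictly above the axis, nearest to the
left for up steps weakly below), in such a way that in total exactly one down
step remains unpaired, and it ends on the `x`-axis. -/

theorem path_pairing_exists (d : ℕ) (R S : Finset ℕ)
    (hR : R ⊆ Finset.Icc 1 d) (hS : S ⊆ Finset.range (d + 1))
    (hcard : S.card = R.card ∨ S.card = R.card + 1) :
    ∃ f₁ f₂ : ℕ → ℕ,
      IsPairing (pathOne d R S) f₁ ∧ IsPairing (pathTwo d R S) f₂ ∧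
      (unpairedDowns (pathOne d R S) f₁).card + (unpairedDowns (pathTwo d R S) f₂).card = 1 ∧
      (∀ j ∈ unpairedDowns (pathOne d R S) f₁, heightAt (pathOne d R S) (j + 1) = 0) ∧
      (∀ j ∈ unpairedDowns (pathTwo d R S) f₂, heightAt (pathTwo d R S) (j + 1) = 0) := by
  classical
  have hRfix : ((Finset.Icc 1 d).filter (· ∈ R)) = R := by
    rw [Finset.filter_mem_eq_inter]
    exact Finset.inter_eq_right.mpr hR
  have hSfix : ((Finset.range (d + 1)).filter (· ∈ S)) = S := by
    rw [Finset.filter_mem_eq_inter]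
    exact Finset.inter_eq_right.mpr hS
  have h1sum : ((pathOne d R S).map stepVal).sum = (R.card : ℤ) - S.card := by
    rw [pathOne_sum, hRfix, hSfix]
  have hsum := pathSums d R S
  have hh1 : heightAt (pathOne d R S) 0 = (S.card : ℤ) - R.card := by
    rw [heightAt, List.drop_zero, h1sum]
    ring
  have hh2 : heightAt (pathTwo d R S) 0 = (R.card : ℤ) + 1 - S.card := by
    rw [heightAt, List.drop_zero]
    rw [h1sum] at hsum
    omega
  have hb1 : 0 ≤ heightAt (pathOne d R S) 0 ∧ heightAt (pathOne d R S) 0 ≤ 1 := by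
    rw [hh1]; rcases hcard with h | h <;> rw [h] <;> push_cast <;> omega
  have hb2 : 0 ≤ heightAt (pathTwo d R S) 0 ∧ heightAt (pathTwo d R S) 0 ≤ 1 := by
    rw [hh2]; rcases hcard with h | h <;> rw [h] <;> push_cast <;> omega
  have hp1 := isPairing_pairFun (pathOne d R S) hb1.1
  have hp2 := isPairing_pairFun (pathTwo d R S) hb2.1
  refine ⟨pairFun (pathOne d R S), pairFun (pathTwo d R S), hp1, hp2, ?_,
    unpaired_ends_zero _ hb1.1 hb1.2, unpaired_ends_zero _ hb2.1 hb2.2⟩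
  have c1 := unpairedDowns_card (pathOne d R S) _ hp1
  have c2 := unpairedDowns_card (pathTwo d R S) _ hp2
  rw [hh1] at c1
  rw [hh2] at c2
  rcases hcard with h | h <;> rw [h] at c1 c2 <;> omega
end
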